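/- arXiv:math/9411231 — 8 statements merged into one kernel-verified Lean document; each statement's English description precedes it below -/
import Mathlib

section
/- For 0 < q < 1, nonnegative integers α, β, and any function f : ℝ → ℝ, the Jackson q-integral satisfies ∫_0^1 f(q^{-β} x) x^α (x; q^{-1})_β d_q x = q^{β(α+1)} ∫_0^1 f(x) x^α (qx; q)_β d_q x. -/
/-- The Jackson q-integral `∫_0^c f(x) d_q x = c(1-q) ∑_{k=0}^∞ f(c q^k) q^k`. -/
noncomputable def jacksonIntegral (q c : ℝ) (f : ℝ → ℝ) : ℝ :=
  c * (1 - q) * ∑' k : ℕ, f (c * q ^ k) * q ^ k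

/-- The finite q-Pochhammer symbol `(a;q)_m = ∏_{k=0}^{m-1} (1 - a q^k)`. -/
noncomputable def qPoch (a q : ℝ) (m : ℕ) : ℝ :=
  ∏ k ∈ Finset.range m, (1 - a * q ^ k)

/-!
On the Jackson grid `x = q^k` the factor `(x; q^{-1})_β` vanishes for `k < β`, so the
left-hand series starts at `k = β`. Substituting `k = n + β` turns `f(q^{-β} x)` into `f(q^n)`,
reverses the product `(q^{n+β}; q^{-1})_β` into `(q^{n+1}; q)_β`, and pulls `q^{β(α+1)}` out
of `x^α · q^k`.
-/

theorem tsum_nat_add_of_eq_zero {M : Type*} [AddCommMonoid M] [TopologicalSpace M]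
    {g : ℕ → M} {n : ℕ} (hg : ∀ k < n, g k = 0) : ∑' k, g (k + n) = ∑' k, g k := by
  refine (add_left_injective n).tsum_eq fun k hk => ⟨k - n, Nat.sub_add_cancel ?_⟩
  exact not_lt.1 fun hlt => hk (hg k hlt)

theorem qPoch_succ' (a q : ℝ) (m : ℕ) : qPoch a q (m + 1) = (1 - a) * qPoch (a * q) q m := by
  simp only [qPoch, Finset.prod_range_succ', pow_succ', pow_zero, mul_one, mul_assoc,
    mul_comm _ (1 - a)]

theorem qPoch_succ (a q : ℝ) (m : ℕ) : qPoch a q (m + 1) = qPoch a q m * (1 - a * q ^ m) :=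
  Finset.prod_range_succ _ _

theorem qPoch_pow_inv_eq_zero {q : ℝ} (hq : q ≠ 0) {k m : ℕ} (hk : k < m) :
    qPoch (q ^ k) q⁻¹ m = 0 :=
  Finset.prod_eq_zero (Finset.mem_range.mpr hk) <| by
    rw [inv_pow, mul_inv_cancel₀ (pow_ne_zero k hq), sub_self]

theorem qPoch_mul_pow_inv {q : ℝ} (hq : q ≠ 0) (a : ℝ) (m : ℕ) :
    qPoch (a * q ^ m) q⁻¹ m = qPoch (a * q) q m := by
  induction m with
  | zero => simp [qPoch]
  | succ m ih =>
    have hshift : a * q ^ (m + 1) * q⁻¹ = a * q ^ m := by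
      rw [pow_succ, mul_assoc, mul_assoc, mul_inv_cancel₀ hq, mul_one]
    rw [qPoch_succ', hshift, ih, qPoch_succ, mul_comm, mul_assoc, ← pow_succ']

theorem jackson_shift_general (q : ℝ) (hq0 : 0 < q) (α β : ℕ) (f : ℝ → ℝ) :
    jacksonIntegral q 1 (fun x => f (q ^ (-(β : ℤ)) * x) * x ^ α * qPoch x q⁻¹ β) =
      q ^ (β * (α + 1)) * jacksonIntegral q 1 (fun x => f x * x ^ α * qPoch (q * x) q β) := by
  have hq : q ≠ 0 := hq0.ne'
  have hshift : ∀ n : ℕ,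
      f (q ^ (-(β : ℤ)) * q ^ (n + β)) * (q ^ (n + β)) ^ α * qPoch (q ^ (n + β)) q⁻¹ β
        * q ^ (n + β) =
      q ^ (β * (α + 1)) * (f (q ^ n) * (q ^ n) ^ α * qPoch (q * q ^ n) q β * q ^ n) := by
    intro n
    rw [pow_add, qPoch_mul_pow_inv hq, zpow_neg, zpow_natCast, mul_comm (q ^ n) (q ^ β),
      inv_mul_cancel_left₀ (pow_ne_zero β hq), mul_comm (q ^ n) q]
    ring
  simp only [jacksonIntegral, one_mul]
  rw [← tsum_nat_add_of_eq_zero (n := β) fun k hk => by simp [qPoch_pow_inv_eq_zero hq hk],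
    tsum_congr hshift, tsum_mul_left]
  ring

/-- For `0 < q < 1`, nonnegative integers `α, β` and any `f : ℝ → ℝ` (with both Jackson
integrals absolutely convergent),
`∫_0^1 f(q^{-β} x) x^α (x; q^{-1})_β d_q x = q^{β(α+1)} ∫_0^1 f(x) x^α (qx; q)_β d_q x`. -/
theorem jackson_shift (q : ℝ) (hq0 : 0 < q) (hq1 : q < 1) (α β : ℕ) (f : ℝ → ℝ)
    (h1 : Summable fun k : ℕ =>
      |f (q ^ (-(β : ℤ)) * q ^ k) * (q ^ k) ^ α * qPoch (q ^ k) q⁻¹ β * q ^ k|)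
    (h2 : Summable fun k : ℕ =>
      |f (q ^ k) * (q ^ k) ^ α * qPoch (q * q ^ k) q β * q ^ k|) :
    jacksonIntegral q 1 (fun x => f (q ^ (-(β : ℤ)) * x) * x ^ α * qPoch x q⁻¹ β) =
      q ^ (β * (α + 1)) * jacksonIntegral q 1 (fun x => f x * x ^ α * qPoch (q * x) q β) :=
  jackson_shift_general q hq0 α β f
end

section
/- In the algebra Z_n, setting Q_i = ∑_{k=1}^i z_k w_k, the following hold for 1 ≤ i, k ≤ n: Q_i Q_k = Q_k Q_i; z_k w_k = Q_k − Q_{k-1}; w_k z_k = Q_k − q² Q_{k-1}; z_k Q_i = q^{-2} Q_i z_k and w_k Q_i = q² Q_i w_k if k > i; z_k Q_i = Q_i z_k and w_k Q_i = Q_i w_k if k ≤ i. -/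
noncomputable section

/-- Free algebra on generators `z_1,…,z_n, w_1,…,w_n`. -/
abbrev FreeZW (n : ℕ) := FreeAlgebra ℂ (Fin n ⊕ Fin n)

/-- Generator `z_i`. -/
def zGen (n : ℕ) (i : Fin n) : FreeZW n := FreeAlgebra.ι ℂ (Sum.inl i)

/-- Generator `w_i`. -/
def wGen (n : ℕ) (i : Fin n) : FreeZW n := FreeAlgebra.ι ℂ (Sum.inr i)

/-- The defining relations of the quantized algebra of polynomials on `ℂ^n`:
`z_i z_j = q z_j z_i` (i<j), `w_j w_i = q w_i w_j` (i<j), `w_i z_j = q z_j w_i` (i≠j),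
`w_i z_i = z_i w_i + (1-q²) ∑_{k<i} z_k w_k`. -/
inductive ZRel (n : ℕ) (q : ℝ) : FreeZW n → FreeZW n → Prop
  | zz {i j : Fin n} (h : i < j) :
      ZRel n q (zGen n i * zGen n j) ((q : ℂ) • (zGen n j * zGen n i))
  | ww {i j : Fin n} (h : i < j) :
      ZRel n q (wGen n j * wGen n i) ((q : ℂ) • (wGen n i * wGen n j))
  | wz {i j : Fin n} (h : i ≠ j) :
      ZRel n q (wGen n i * zGen n j) ((q : ℂ) • (zGen n j * wGen n i))
  | wzDiag (i : Fin n) :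
      ZRel n q (wGen n i * zGen n i)
        (zGen n i * wGen n i +
          (1 - (q : ℂ) ^ 2) • ∑ k ∈ Finset.univ.filter (· < i), zGen n k * wGen n k)

/-- The quantized algebra `Z_n` of polynomials on `ℂ^n`. -/
abbrev ZAlg (n : ℕ) (q : ℝ) := RingQuot (ZRel n q)

/-- The generator `z_i` of `Z_n`. -/
def zEl (n : ℕ) (q : ℝ) (i : Fin n) : ZAlg n q :=
  RingQuot.mkAlgHom ℂ (ZRel n q) (zGen n i)

/-- The generator `w_i` of `Z_n`. -/
def wEl (n : ℕ) (q : ℝ) (i : Fin n) : ZAlg n q :=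
  RingQuot.mkAlgHom ℂ (ZRel n q) (wGen n i)

/-- The monomial `z^λ w^μ = z_1^{λ_1} ⋯ z_n^{λ_n} w_n^{μ_n} ⋯ w_1^{μ_1}` in `Z_n`. -/
def zwMono (n : ℕ) (q : ℝ) (lam mu : Fin n → ℕ) : ZAlg n q :=
  (List.ofFn fun i : Fin n => zEl n q i ^ lam i).prod *
    (List.ofFn fun i : Fin n => wEl n q i.rev ^ mu i.rev).prod

/-- The central element `Q_i = ∑_{k=1}^{i} z_k w_k` (here `i : ℕ`, summing over the first
`i` indices; `Q_0 = 0`). -/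
def QEl (n : ℕ) (q : ℝ) (i : ℕ) : ZAlg n q :=
  ∑ k ∈ Finset.univ.filter (fun k : Fin n => (k : ℕ) < i), zEl n q k * wEl n q k

/-!
For `m < k` the relations make `z_k` and `w_k` commute with `z_m w_m` up to the factors `q⁻²`
and `q²`, and for `m > k` they commute with it outright. Summing gives the case `i ≤ k` term by
term. For `k < i` it remains to pass `z_k`, `w_k` through `Q_{k+1} = Q_k + z_k w_k`, which is
where the diagonal relation `w_k z_k = z_k w_k + (1 - q²) Q_k` cancels the factor picked up
from `Q_k`. Since `q⁻²` and `q²` cancel in `z_m w_m`, every `z_m w_m`, hence every `Q_j`,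
commutes with every `Q_i`.
-/

def SkewCommute {R A : Type*} [CommSemiring R] [Semiring A] [Algebra R A]
    (c : R) (a b : A) : Prop :=
  a * b = c • (b * a)

namespace SkewCommute

variable {R A : Type*} [CommSemiring R] [Semiring A] [Algebra R A] {c c' : R} {a b d : A}

theorem one_iff : SkewCommute (1 : R) a b ↔ Commute a b := by
  rw [SkewCommute, one_smul]
  rfl

theorem mul_right (hb : SkewCommute c a b) (hd : SkewCommute c' a d) :
    SkewCommute (c * c') a (b * d) := by
  unfold SkewCommute at *
  rw [← mul_assoc, hb, smul_mul_assoc, mul_assoc, hd, mul_smul_comm, smul_smul, mul_assoc]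

theorem mul_left (ha : SkewCommute c a d) (hb : SkewCommute c' b d) :
    SkewCommute (c * c') (a * b) d := by
  unfold SkewCommute at *
  rw [mul_assoc, hb, mul_smul_comm, ← mul_assoc, ha, smul_mul_assoc, smul_smul, mul_comm c',
    mul_assoc]

theorem sum_right {ι : Type*} (s : Finset ι) (f : ι → A)
    (h : ∀ i ∈ s, SkewCommute c a (f i)) : SkewCommute c a (∑ i ∈ s, f i) := by
  unfold SkewCommute at *
  rw [Finset.mul_sum, Finset.sum_mul, Finset.smul_sum]
  exact Finset.sum_congr rfl h

theorem symm {K : Type*} [Semifield K] [Algebra K A] {c : K} (h : SkewCommute c a b)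
    (hc : c ≠ 0) : SkewCommute c⁻¹ b a :=
  ((inv_smul_eq_iff₀ hc).mpr h).symm

end SkewCommute

section Relations

variable {n : ℕ} {q : ℝ}

theorem zEl_skewCommute_zEl {i j : Fin n} (h : i < j) :
    SkewCommute (q : ℂ) (zEl n q i) (zEl n q j) := by
  simpa only [SkewCommute, zEl, map_mul, map_smul] using
    RingQuot.mkAlgHom_rel ℂ (ZRel.zz (q := q) h)

theorem wEl_skewCommute_wEl {i j : Fin n} (h : i < j) :
    SkewCommute (q : ℂ) (wEl n q j) (wEl n q i) := by
  simpa only [SkewCommute, wEl, map_mul, map_smul] using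
    RingQuot.mkAlgHom_rel ℂ (ZRel.ww (q := q) h)

theorem wEl_skewCommute_zEl {i j : Fin n} (h : i ≠ j) :
    SkewCommute (q : ℂ) (wEl n q i) (zEl n q j) := by
  simpa only [SkewCommute, zEl, wEl, map_mul, map_smul] using
    RingQuot.mkAlgHom_rel ℂ (ZRel.wz (q := q) h)

theorem wEl_mul_zEl_self (i : Fin n) :
    wEl n q i * zEl n q i = zEl n q i * wEl n q i + (1 - (q : ℂ) ^ 2) • QEl n q i := by
  simpa only [QEl, zEl, wEl, map_mul, map_add, map_smul, map_sum, ← Fin.lt_def] using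
    RingQuot.mkAlgHom_rel ℂ (ZRel.wzDiag (q := q) i)

end Relations

section Commutation

variable {n : ℕ} {q : ℝ}

theorem QEl_val_succ (k : Fin n) :
    QEl n q (k + 1) = QEl n q k + zEl n q k * wEl n q k := by
  have hs : Finset.univ.filter (fun m : Fin n => (m : ℕ) < k + 1)
      = insert k (Finset.univ.filter (fun m : Fin n => (m : ℕ) < k)) := by
    ext m
    simp only [Finset.mem_filter, Finset.mem_insert, Finset.mem_univ, true_and, Fin.ext_iff]
    omega
  rw [QEl, hs, Finset.sum_insert (by simp), add_comm]
  rfl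

theorem QEl_succ_of_le {i : ℕ} (h : n ≤ i) : QEl n q (i + 1) = QEl n q i := by
  unfold QEl
  congr 1
  ext m
  simp only [Finset.mem_filter, Finset.mem_univ, true_and]
  omega

theorem Commute.QEl_succ {x : ZAlg n q} {i : ℕ} (hQ : Commute x (QEl n q i))
    (hzw : ∀ m : Fin n, (m : ℕ) = i → Commute x (zEl n q m * wEl n q m)) :
    Commute x (QEl n q (i + 1)) := by
  by_cases hi : i < n
  · rw [QEl_val_succ ⟨i, hi⟩]
    exact hQ.add_right (hzw _ rfl)
  · rwa [QEl_succ_of_le (not_lt.mp hi)]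

theorem wEl_skewCommute_zw_of_gt {k m : Fin n} (h : m < k) :
    SkewCommute ((q : ℂ) ^ 2) (wEl n q k) (zEl n q m * wEl n q m) := by
  have := (wEl_skewCommute_zEl (q := q) h.ne').mul_right (wEl_skewCommute_wEl h)
  rwa [← sq] at this

theorem wEl_skewCommute_QEl_of_le {k : Fin n} {i : ℕ} (h : i ≤ k) :
    SkewCommute ((q : ℂ) ^ 2) (wEl n q k) (QEl n q i) :=
  SkewCommute.sum_right _ _ fun m hm =>
    wEl_skewCommute_zw_of_gt (Fin.lt_def.mpr (by simp at hm; omega))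

theorem wEl_commute_QEl_val_succ (k : Fin n) : Commute (wEl n q k) (QEl n q (k + 1)) := by
  have hQ : SkewCommute ((q : ℂ) ^ 2) (wEl n q k) (QEl n q k) := wEl_skewCommute_QEl_of_le le_rfl
  unfold SkewCommute at hQ
  rw [Commute, SemiconjBy, QEl_val_succ, mul_add, add_mul, hQ, ← mul_assoc (wEl n q k),
    wEl_mul_zEl_self, add_mul, smul_mul_assoc]
  module

variable (hq : (q : ℂ) ≠ 0)
include hq

theorem zEl_commute_zw_of_lt {k m : Fin n} (h : k < m) :
    Commute (zEl n q k) (zEl n q m * wEl n q m) := by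
  have := (zEl_skewCommute_zEl h).mul_right ((wEl_skewCommute_zEl h.ne').symm hq)
  rwa [mul_inv_cancel₀ hq, SkewCommute.one_iff] at this

theorem zEl_skewCommute_zw_of_gt {k m : Fin n} (h : m < k) :
    SkewCommute ((q : ℂ) ^ 2)⁻¹ (zEl n q k) (zEl n q m * wEl n q m) := by
  have := ((zEl_skewCommute_zEl h).symm hq).mul_right ((wEl_skewCommute_zEl h.ne).symm hq)
  rwa [← mul_inv, ← sq] at this

theorem wEl_commute_zw_of_lt {k m : Fin n} (h : k < m) :
    Commute (wEl n q k) (zEl n q m * wEl n q m) := by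
  have := (wEl_skewCommute_zEl h.ne).mul_right ((wEl_skewCommute_wEl h).symm hq)
  rwa [mul_inv_cancel₀ hq, SkewCommute.one_iff] at this

theorem zEl_skewCommute_QEl_of_le {k : Fin n} {i : ℕ} (h : i ≤ k) :
    SkewCommute ((q : ℂ) ^ 2)⁻¹ (zEl n q k) (QEl n q i) :=
  SkewCommute.sum_right _ _ fun m hm =>
    zEl_skewCommute_zw_of_gt hq (Fin.lt_def.mpr (by simp at hm; omega))

theorem zEl_commute_QEl_val_succ (k : Fin n) : Commute (zEl n q k) (QEl n q (k + 1)) := by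
  have hQ : SkewCommute ((q : ℂ) ^ 2)⁻¹ (zEl n q k) (QEl n q k) :=
    zEl_skewCommute_QEl_of_le hq le_rfl
  unfold SkewCommute at hQ
  have hzw : zEl n q k * (zEl n q k * wEl n q k)
      = zEl n q k * wEl n q k * zEl n q k - (1 - (q : ℂ) ^ 2) • (zEl n q k * QEl n q k) := by
    rw [mul_assoc, wEl_mul_zEl_self, mul_add, mul_smul_comm]
    abel
  rw [Commute, SemiconjBy, QEl_val_succ, mul_add, add_mul, hzw, hQ]
  match_scalars
  · field_simp
    ring
  · rfl

theorem zEl_commute_QEl_of_lt {k : Fin n} {i : ℕ} (h : k < i) :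
    Commute (zEl n q k) (QEl n q i) := by
  induction i, h using Nat.le_induction with
  | base => exact zEl_commute_QEl_val_succ hq k
  | succ i hki ih =>
    exact ih.QEl_succ fun m hm => zEl_commute_zw_of_lt hq (Fin.lt_def.mpr (by omega))

theorem wEl_commute_QEl_of_lt {k : Fin n} {i : ℕ} (h : k < i) :
    Commute (wEl n q k) (QEl n q i) := by
  induction i, h using Nat.le_induction with
  | base => exact wEl_commute_QEl_val_succ k
  | succ i hki ih =>
    exact ih.QEl_succ fun m hm => wEl_commute_zw_of_lt hq (Fin.lt_def.mpr (by omega))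

theorem zw_commute_QEl (m : Fin n) (i : ℕ) : Commute (zEl n q m * wEl n q m) (QEl n q i) := by
  by_cases h : (m : ℕ) < i
  · exact (zEl_commute_QEl_of_lt hq h).mul_left (wEl_commute_QEl_of_lt hq h)
  · have := (zEl_skewCommute_QEl_of_le hq (not_lt.mp h)).mul_left
      (wEl_skewCommute_QEl_of_le (not_lt.mp h))
    rwa [inv_mul_cancel₀ (pow_ne_zero 2 hq), SkewCommute.one_iff] at this

theorem QEl_commute_QEl (i j : ℕ) : Commute (QEl n q i) (QEl n q j) :=
  Commute.sum_left _ _ _ fun m _ => zw_commute_QEl hq m j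

end Commutation

theorem QEl_identities_general (n : ℕ) (q : ℝ) (h0 : 0 < q) :
    (∀ i j : ℕ, QEl n q i * QEl n q j = QEl n q j * QEl n q i) ∧
    (∀ k : Fin n, zEl n q k * wEl n q k = QEl n q ((k : ℕ) + 1) - QEl n q (k : ℕ)) ∧
    (∀ k : Fin n, wEl n q k * zEl n q k =
        QEl n q ((k : ℕ) + 1) - (q : ℂ) ^ 2 • QEl n q (k : ℕ)) ∧
    (∀ (i : ℕ) (k : Fin n), i ≤ (k : ℕ) →
        zEl n q k * QEl n q i = (((q : ℂ) ^ 2)⁻¹) • (QEl n q i * zEl n q k) ∧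
        wEl n q k * QEl n q i = (q : ℂ) ^ 2 • (QEl n q i * wEl n q k)) ∧
    (∀ (i : ℕ) (k : Fin n), (k : ℕ) < i →
        zEl n q k * QEl n q i = QEl n q i * zEl n q k ∧
        wEl n q k * QEl n q i = QEl n q i * wEl n q k) := by
  have hq : (q : ℂ) ≠ 0 := by exact_mod_cast h0.ne'
  refine ⟨fun i j => (QEl_commute_QEl hq i j).eq, fun k => ?_, fun k => ?_,
    fun i k h => ⟨zEl_skewCommute_QEl_of_le hq h, wEl_skewCommute_QEl_of_le h⟩,
    fun i k h => ⟨(zEl_commute_QEl_of_lt hq h).eq, (wEl_commute_QEl_of_lt hq h).eq⟩⟩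
  · rw [QEl_val_succ, add_sub_cancel_left]
  · rw [wEl_mul_zEl_self, QEl_val_succ]
    module

/-- Basic identities for `Q_i = ∑_{k=1}^i z_k w_k` in `Z_n` (indices for `z, w` are 0-based:
the paper's `z_k` is `zEl n q ⟨k-1,_⟩` and the paper's `Q_i` is `QEl n q i`, `Q_0 = 0`):
the `Q_i` commute; `z_k w_k = Q_k − Q_{k-1}`; `w_k z_k = Q_k − q² Q_{k-1}`;
`z_k Q_i = q^{-2} Q_i z_k` and `w_k Q_i = q² Q_i w_k` if `k > i`;
`z_k Q_i = Q_i z_k` and `w_k Q_i = Q_i w_k` if `k ≤ i`. -/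
theorem QEl_identities (n : ℕ) (q : ℝ) (h0 : 0 < q) (h1 : q < 1) :
    (∀ i j : ℕ, QEl n q i * QEl n q j = QEl n q j * QEl n q i) ∧
    (∀ k : Fin n, zEl n q k * wEl n q k = QEl n q ((k : ℕ) + 1) - QEl n q (k : ℕ)) ∧
    (∀ k : Fin n, wEl n q k * zEl n q k =
        QEl n q ((k : ℕ) + 1) - (q : ℂ) ^ 2 • QEl n q (k : ℕ)) ∧
    (∀ (i : ℕ) (k : Fin n), i ≤ (k : ℕ) →
        zEl n q k * QEl n q i = (((q : ℂ) ^ 2)⁻¹) • (QEl n q i * zEl n q k) ∧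
        wEl n q k * QEl n q i = (q : ℂ) ^ 2 • (QEl n q i * wEl n q k)) ∧
    (∀ (i : ℕ) (k : Fin n), (k : ℕ) < i →
        zEl n q k * QEl n q i = QEl n q i * zEl n q k ∧
        wEl n q k * QEl n q i = QEl n q i * wEl n q k) :=
  QEl_identities_general n q h0

end
end

section
/- In the algebra Z_n, for each 1 ≤ k ≤ n and m ≥ 0: z_k^m w_k^m = Q_k^m · (Q_{k-1}/Q_k; q^{-2})_m and w_k^m z_k^m = Q_k^m · (q² Q_{k-1}/Q_k; q²)_m, where these identities are understood as z_k^m w_k^m = ∏_{j=0}^{m-1} (Q_k − q^{-2j} Q_{k-1}) and w_k^m z_k^m = ∏_{j=0}^{m-1} (Q_k − q^{2j+2} Q_{k-1}). -/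
noncomputable section

/-!
Write `P = Q_{k+1}` and `A = Q_k`. Then `z_k w_k = P - A` and `w_k z_k = P - q² A`, the element `P`
commutes with `z_k` and `w_k`, while `A z_k = q² z_k A` and `A w_k = q⁻² w_k A`. Hence
`x^{m+1} y^{m+1} = x^m (P - a A) y^m = x^m y^m (P - a d^m A)` for `(x, y, a, d)` equal to
`(z_k, w_k, 1, q⁻²)` or `(w_k, z_k, q², q²)`, and induction on `m` gives both products.
-/

section QPochhammer

variable {K R : Type*} [CommSemiring K] [Ring R] [Algebra K R]

theorem mul_pow_eq_smul_pow_mul {a b : R} {c : K} (h : a * b = c • (b * a)) (t : ℕ) :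
    a * b ^ t = c ^ t • (b ^ t * a) := by
  induction t with
  | zero => simp
  | succ t ih =>
    rw [pow_succ, ← mul_assoc, ih, smul_mul_assoc, mul_assoc, h, mul_smul_comm, smul_smul,
      ← mul_assoc, ← pow_succ]

theorem pow_mul_pow_eq_prod_sub_smul {x y P A : R} {a d : K} (hxy : x * y = P - a • A)
    (hP : Commute P y) (hA : A * y = d • (y * A)) (m : ℕ) :
    x ^ m * y ^ m = ((List.range m).map fun j => P - (a * d ^ j) • A).prod := by
  induction m with
  | zero => simp
  | succ m ih =>
    have hmove : (P - a • A) * y ^ m = y ^ m * (P - (a * d ^ m) • A) := by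
      rw [sub_mul, mul_sub, (hP.pow_right m).eq, smul_mul_assoc, mul_pow_eq_smul_pow_mul hA,
        smul_smul, mul_smul_comm]
    calc x ^ (m + 1) * y ^ (m + 1) = x ^ m * ((x * y) * y ^ m) := by
          rw [pow_succ, pow_succ' y]; simp only [mul_assoc]
      _ = x ^ m * y ^ m * (P - (a * d ^ m) • A) := by rw [hxy, hmove, mul_assoc]
      _ = _ := by rw [ih, List.prod_range_succ]

end QPochhammer

section Relations

variable {n : ℕ} {q : ℝ}

theorem zEl_mul_zEl {i j : Fin n} (h : i < j) :
    zEl n q i * zEl n q j = (q : ℂ) • (zEl n q j * zEl n q i) := by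
  simpa only [zEl, map_mul, map_smul] using RingQuot.mkAlgHom_rel ℂ (ZRel.zz (q := q) h)

theorem wEl_mul_wEl {i j : Fin n} (h : i < j) :
    wEl n q j * wEl n q i = (q : ℂ) • (wEl n q i * wEl n q j) := by
  simpa only [wEl, map_mul, map_smul] using RingQuot.mkAlgHom_rel ℂ (ZRel.ww (q := q) h)

theorem wEl_mul_zEl_of_ne {i j : Fin n} (h : i ≠ j) :
    wEl n q i * zEl n q j = (q : ℂ) • (zEl n q j * wEl n q i) := by
  simpa only [zEl, wEl, map_mul, map_smul] using RingQuot.mkAlgHom_rel ℂ (ZRel.wz (q := q) h)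

theorem QEl_succ (k : Fin n) : QEl n q (k + 1) = zEl n q k * wEl n q k + QEl n q k := by
  have hfilter : Finset.univ.filter (fun j : Fin n => (j : ℕ) < k + 1) =
      insert k (Finset.univ.filter fun j : Fin n => (j : ℕ) < k) := by
    ext j
    simp only [Finset.mem_filter, Finset.mem_univ, true_and, Finset.mem_insert, Fin.ext_iff]
    omega
  rw [QEl, QEl, hfilter, Finset.sum_insert (by simp)]

theorem QEl_mul_zEl (k : Fin n) :
    QEl n q k * zEl n q k = ((q : ℂ) ^ 2) • (zEl n q k * QEl n q k) := by
  rw [QEl, Finset.sum_mul, Finset.mul_sum, Finset.smul_sum]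
  refine Finset.sum_congr rfl fun j hj => ?_
  have hjk : j < k := Fin.lt_def.mpr (Finset.mem_filter.mp hj).2
  rw [mul_assoc, wEl_mul_zEl_of_ne hjk.ne, mul_smul_comm, ← mul_assoc, zEl_mul_zEl hjk,
    smul_mul_assoc, smul_smul, ← pow_two, mul_assoc]

theorem wEl_mul_QEl (k : Fin n) :
    wEl n q k * QEl n q k = ((q : ℂ) ^ 2) • (QEl n q k * wEl n q k) := by
  rw [QEl, Finset.sum_mul, Finset.mul_sum, Finset.smul_sum]
  refine Finset.sum_congr rfl fun j hj => ?_
  have hjk : j < k := Fin.lt_def.mpr (Finset.mem_filter.mp hj).2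
  rw [← mul_assoc, wEl_mul_zEl_of_ne hjk.ne', smul_mul_assoc, mul_assoc, wEl_mul_wEl hjk,
    mul_smul_comm, smul_smul, ← pow_two, mul_assoc]

theorem zEl_mul_wEl_eq_sub (k : Fin n) :
    zEl n q k * wEl n q k = QEl n q (k + 1) - QEl n q k := by
  rw [QEl_succ, add_sub_cancel_right]

theorem wEl_mul_zEl_eq_sub (k : Fin n) :
    wEl n q k * zEl n q k = QEl n q (k + 1) - ((q : ℂ) ^ 2) • QEl n q k := by
  rw [wEl_mul_zEl_self, QEl_succ]
  module

/-- `Q_{k+1} = z_k w_k + Q_k = w_k z_k + q² Q_k`, and `Q_k` `q²`-commutes with `z_k`. -/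
theorem commute_QEl_succ_zEl (k : Fin n) : Commute (QEl n q (k + 1)) (zEl n q k) := by
  have hQ : QEl n q (k + 1) = wEl n q k * zEl n q k + ((q : ℂ) ^ 2) • QEl n q k := by
    rw [wEl_mul_zEl_eq_sub, sub_add_cancel]
  calc QEl n q (k + 1) * zEl n q k
      = zEl n q k * wEl n q k * zEl n q k + QEl n q k * zEl n q k := by
        rw [QEl_succ, add_mul]
    _ = zEl n q k * QEl n q (k + 1) := by
        rw [hQ, QEl_mul_zEl, mul_add, mul_smul_comm, mul_assoc]

theorem commute_QEl_succ_wEl (k : Fin n) : Commute (QEl n q (k + 1)) (wEl n q k) := by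
  have hQ : QEl n q (k + 1) = wEl n q k * zEl n q k + ((q : ℂ) ^ 2) • QEl n q k := by
    rw [wEl_mul_zEl_eq_sub, sub_add_cancel]
  calc QEl n q (k + 1) * wEl n q k
      = wEl n q k * zEl n q k * wEl n q k + ((q : ℂ) ^ 2) • (QEl n q k * wEl n q k) := by
        rw [hQ, add_mul, smul_mul_assoc]
    _ = wEl n q k * QEl n q (k + 1) := by
        rw [← wEl_mul_QEl, QEl_succ, mul_add, mul_assoc]

end Relations

theorem zw_pow_eq_qPoch_general (n : ℕ) (q : ℝ) (h0 : 0 < q) (k : Fin n) (m : ℕ) :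
    zEl n q k ^ m * wEl n q k ^ m =
      ((List.range m).map fun j =>
        QEl n q ((k : ℕ) + 1) - ((((q : ℂ) ^ 2)⁻¹) ^ j) • QEl n q (k : ℕ)).prod ∧
    wEl n q k ^ m * zEl n q k ^ m =
      ((List.range m).map fun j =>
        QEl n q ((k : ℕ) + 1) - ((q : ℂ) ^ (2 * j + 2)) • QEl n q (k : ℕ)).prod := by
  have hc : ((q : ℂ) ^ 2) ≠ 0 := pow_ne_zero 2 (Complex.ofReal_ne_zero.mpr h0.ne')
  have hQw : QEl n q k * wEl n q k = ((q : ℂ) ^ 2)⁻¹ • (wEl n q k * QEl n q k) := by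
    rw [wEl_mul_QEl, smul_smul, inv_mul_cancel₀ hc, one_smul]
  have hzw : zEl n q k * wEl n q k = QEl n q (k + 1) - (1 : ℂ) • QEl n q k := by
    rw [one_smul, zEl_mul_wEl_eq_sub]
  constructor
  · simpa only [one_mul] using
      pow_mul_pow_eq_prod_sub_smul hzw (commute_QEl_succ_wEl k) hQw m
  · simpa only [← pow_mul, ← pow_add, Nat.add_comm 2] using
      pow_mul_pow_eq_prod_sub_smul (wEl_mul_zEl_eq_sub k) (commute_QEl_succ_zEl k)
        (QEl_mul_zEl k) m

/-- In `Z_n` (0-based indexing: the paper's `z_k, Q_{k-1}, Q_k` are `zEl n q k`,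
`QEl n q (k : ℕ)`, `QEl n q ((k : ℕ)+1)`): for every `k` and `m ≥ 0`,
`z_k^m w_k^m = ∏_{j=0}^{m-1} (Q_k − q^{-2j} Q_{k-1})` and
`w_k^m z_k^m = ∏_{j=0}^{m-1} (Q_k − q^{2j+2} Q_{k-1})`
(the factors commute; we take the ordered product). -/
theorem zw_pow_eq_qPoch (n : ℕ) (q : ℝ) (h0 : 0 < q) (h1 : q < 1) (k : Fin n) (m : ℕ) :
    zEl n q k ^ m * wEl n q k ^ m =
      ((List.range m).map fun j =>
        QEl n q ((k : ℕ) + 1) - ((((q : ℂ) ^ 2)⁻¹) ^ j) • QEl n q (k : ℕ)).prod ∧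
    wEl n q k ^ m * zEl n q k ^ m =
      ((List.range m).map fun j =>
        QEl n q ((k : ℕ) + 1) - ((q : ℂ) ^ (2 * j + 2)) • QEl n q (k : ℕ)).prod :=
  zw_pow_eq_qPoch_general n q h0 k m

end
end

section
/- In the algebra Z_n, for each 1 ≤ i ≤ n and each m ≥ 0, the element (z_i w_i)^m can be written as (z_i w_i)^m = ∑_{k=0}^m c_k z_i^k w_i^k Q_i^{m−k} for some coefficients c_k ∈ ℂ[q²]. -/
noncomputable section

/-! Put `z = z_i`, `w = w_i`, `Q = Q_i` and `t = q²`. Only three relations matter: `Q` commutes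
with `z` and `w`, and `w z = t z w + (1 - t) Q` (the `q`-oscillator relation with `Q` in place
of `1`). They give `w^k z w = t^k z w^(k+1) + (1 - t^k) Q w^k`, so right multiplication by `z w`
sends `z^k w^k Q^j` to `t^k z^(k+1) w^(k+1) Q^j + (1 - t^k) z^k w^k Q^(j+1)`, and induction on `m`
yields the expansion, with coefficients obeying
`c_{m+1,k+1} = X^k c_{m,k} + (1 - X^(k+1)) c_{m,k+1}`.
-/

open Polynomial Finset

section QOscillator

variable {R A : Type*} [CommRing R] [Ring A] [Algebra R A]

structure IsQOscillator (t : R) (z w Q : A) : Prop where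
  commute_left : Commute Q z
  commute_right : Commute Q w
  mul_eq : w * z = t • (z * w) + (1 - t) • Q

def qOscillatorCoeff (R : Type*) [CommRing R] : ℕ → ℕ → R[X]
  | 0, k => if k = 0 then 1 else 0
  | _ + 1, 0 => 0
  | m + 1, k + 1 =>
      qOscillatorCoeff R m k * X ^ k + qOscillatorCoeff R m (k + 1) * (1 - X ^ (k + 1))

theorem qOscillatorCoeff_of_lt {m k : ℕ} (h : m < k) : qOscillatorCoeff R m k = 0 := by
  induction m generalizing k with
  | zero => simp [qOscillatorCoeff, Nat.pos_iff_ne_zero.mp h]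
  | succ m ih =>
    obtain ⟨k, rfl⟩ := Nat.exists_eq_add_one.mpr (by omega : 0 < k)
    simp [qOscillatorCoeff, ih (by omega : m < k), ih (by omega : m < k + 1)]

namespace IsQOscillator

variable {t : R} {z w Q : A}

theorem pow_mul_mul (h : IsQOscillator t z w Q) (k : ℕ) :
    w ^ k * z * w = t ^ k • (z * w ^ (k + 1)) + (1 - t ^ k) • (Q * w ^ k) := by
  induction k with
  | zero => simp
  | succ k ih =>
    calc w ^ (k + 1) * z * w = w * (w ^ k * z * w) := by simp only [pow_succ', mul_assoc]
      _ = t ^ k • ((w * z) * w ^ (k + 1)) + (1 - t ^ k) • (Q * w ^ (k + 1)) := by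
        rw [ih, mul_add, mul_smul_comm, mul_smul_comm, ← mul_assoc, ← mul_assoc,
          ← h.commute_right.eq, mul_assoc Q, ← pow_succ']
      _ = _ := by
        rw [h.mul_eq, add_mul, smul_mul_assoc, smul_mul_assoc, mul_assoc, ← pow_succ']
        module

theorem monomial_mul (h : IsQOscillator t z w Q) (k j : ℕ) :
    z ^ k * w ^ k * Q ^ j * (z * w) =
      t ^ k • (z ^ (k + 1) * w ^ (k + 1) * Q ^ j) +
        (1 - t ^ k) • (z ^ k * w ^ k * Q ^ (j + 1)) := by
  have hQzw : Commute (Q ^ j) (z * w) :=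
    (h.commute_left.pow_left j).mul_right (h.commute_right.pow_left j)
  rw [mul_assoc, hQzw.eq, ← mul_assoc, mul_assoc (z ^ k), ← mul_assoc (w ^ k), h.pow_mul_mul,
    (h.commute_right.pow_right k).eq]
  simp only [mul_add, add_mul, mul_smul_comm, smul_mul_assoc, ← mul_assoc, ← pow_succ]
  rw [mul_assoc _ Q, ← pow_succ']

theorem mul_pow_eq_sum (h : IsQOscillator t z w Q) (m : ℕ) :
    (z * w) ^ m = ∑ k ∈ range (m + 1),
      (qOscillatorCoeff R m k).eval t • (z ^ k * w ^ k * Q ^ (m - k)) := by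
  induction m with
  | zero => simp [qOscillatorCoeff]
  | succ m ih =>
    set c := fun k => (qOscillatorCoeff R m k).eval t
    set f : ℕ → A := fun k => (c k * (1 - t ^ k)) • (z ^ k * w ^ k * Q ^ (m + 1 - k))
    have hshift : ∑ k ∈ range (m + 1), f (k + 1) = ∑ k ∈ range (m + 1), f k := by
      have hf0 : f 0 = 0 := by simp [f]
      have hfm : f (m + 1) = 0 := by
        simp [f, c, qOscillatorCoeff_of_lt (Nat.lt_succ_self m)]
      rw [← add_zero (∑ k ∈ range (m + 1), f (k + 1)), ← hf0, ← sum_range_succ', sum_range_succ,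
        hfm, add_zero]
    calc (z * w) ^ (m + 1)
        = ∑ k ∈ range (m + 1),
            ((c k * t ^ k) • (z ^ (k + 1) * w ^ (k + 1) * Q ^ (m - k)) + f k) := by
          rw [pow_succ, ih, sum_mul]
          refine sum_congr rfl fun k hk => ?_
          rw [smul_mul_assoc, h.monomial_mul, smul_add, smul_smul, smul_smul,
            ← Nat.sub_add_comm (Nat.lt_succ_iff.mp (mem_range.mp hk))]
      _ = ∑ k ∈ range (m + 1),
            (qOscillatorCoeff R (m + 1) (k + 1)).eval t •
              (z ^ (k + 1) * w ^ (k + 1) * Q ^ (m - k)) := by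
          rw [sum_add_distrib, ← hshift, ← sum_add_distrib]
          refine sum_congr rfl fun k _ => ?_
          simp [qOscillatorCoeff, c, f, add_smul]
      _ = _ := by simp [sum_range_succ' _ (m + 1), qOscillatorCoeff]

end IsQOscillator

end QOscillator

namespace ZAlg

variable {n : ℕ} {q : ℝ}

theorem zEl_mul_zEl_of_lt {i j : Fin n} (h : i < j) :
    zEl n q i * zEl n q j = (q : ℂ) • (zEl n q j * zEl n q i) := by
  simpa only [zEl, wEl, map_mul, map_smul] using RingQuot.mkAlgHom_rel ℂ (ZRel.zz (q := q) h)

theorem wEl_mul_wEl_of_lt {i j : Fin n} (h : i < j) :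
    wEl n q j * wEl n q i = (q : ℂ) • (wEl n q i * wEl n q j) := by
  simpa only [zEl, wEl, map_mul, map_smul] using RingQuot.mkAlgHom_rel ℂ (ZRel.ww (q := q) h)

theorem wEl_mul_zEl_of_ne {i j : Fin n} (h : i ≠ j) :
    wEl n q i * zEl n q j = (q : ℂ) • (zEl n q j * wEl n q i) := by
  simpa only [zEl, wEl, map_mul, map_smul] using RingQuot.mkAlgHom_rel ℂ (ZRel.wz (q := q) h)

theorem wEl_mul_zEl_self (i : Fin n) :
    wEl n q i * zEl n q i = zEl n q i * wEl n q i + (1 - (q : ℂ) ^ 2) • QEl n q i := by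
  simpa only [zEl, wEl, QEl, map_mul, map_add, map_smul, map_sum, Fin.lt_def] using
    RingQuot.mkAlgHom_rel ℂ (ZRel.wzDiag (q := q) i)

theorem QEl_succ (i : Fin n) : QEl n q (i + 1) = QEl n q i + zEl n q i * wEl n q i := by
  have : univ.filter (fun k : Fin n => (k : ℕ) < i + 1) =
      insert i (univ.filter fun k : Fin n => (k : ℕ) < i) := by
    ext k
    simp only [mem_insert, mem_filter, mem_univ, true_and, Fin.ext_iff]
    omega
  rw [QEl, this, sum_insert (by simp), add_comm, QEl]

theorem QEl_mul_zEl (i : Fin n) :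
    QEl n q i * zEl n q i = ((q : ℂ) ^ 2) • (zEl n q i * QEl n q i) := by
  rw [QEl, sum_mul, mul_sum, smul_sum]
  refine sum_congr rfl fun k hk => ?_
  have hki : k < i := Fin.lt_def.mpr (mem_filter.mp hk).2
  rw [mul_assoc, wEl_mul_zEl_of_ne hki.ne, mul_smul_comm, ← mul_assoc, zEl_mul_zEl_of_lt hki,
    smul_mul_assoc, smul_smul, ← sq, mul_assoc]

theorem wEl_mul_QEl (i : Fin n) :
    wEl n q i * QEl n q i = ((q : ℂ) ^ 2) • (QEl n q i * wEl n q i) := by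
  rw [QEl, sum_mul, mul_sum, smul_sum]
  refine sum_congr rfl fun k hk => ?_
  have hki : k < i := Fin.lt_def.mpr (mem_filter.mp hk).2
  rw [← mul_assoc, wEl_mul_zEl_of_ne hki.ne', smul_mul_assoc, mul_assoc, wEl_mul_wEl_of_lt hki,
    mul_smul_comm, smul_smul, ← sq, mul_assoc]

theorem isQOscillator (i : Fin n) :
    IsQOscillator ((q : ℂ) ^ 2) (zEl n q i) (wEl n q i) (QEl n q (i + 1)) where
  commute_left := by
    show _ = _
    rw [QEl_succ, add_mul, mul_add, QEl_mul_zEl, mul_assoc, wEl_mul_zEl_self, mul_add,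
      mul_smul_comm, ← mul_assoc]
    module
  commute_right := by
    show _ = _
    rw [QEl_succ, add_mul, mul_add, wEl_mul_QEl, ← mul_assoc (wEl n q i), wEl_mul_zEl_self,
      add_mul, smul_mul_assoc]
    module
  mul_eq := by
    rw [wEl_mul_zEl_self, QEl_succ]
    module

end ZAlg

theorem zw_mul_pow_expansion_general (n : ℕ) (q : ℝ) (i : Fin n) (m : ℕ) :
    ∃ c : ℕ → Polynomial ℂ,
      (zEl n q i * wEl n q i) ^ m =
        ∑ k ∈ Finset.range (m + 1),
          (c k).eval ((q : ℂ) ^ 2) •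
            (zEl n q i ^ k * wEl n q i ^ k * QEl n q ((i : ℕ) + 1) ^ (m - k)) :=
  ⟨qOscillatorCoeff ℂ m, (ZAlg.isQOscillator i).mul_pow_eq_sum m⟩

/-- In `Z_n`: `(z_i w_i)^m = ∑_{k=0}^m c_k z_i^k w_i^k Q_i^{m−k}` for coefficients
`c_k ∈ ℂ[q²]` (polynomials evaluated at `q²`; the paper's `Q_i` is `QEl n q ((i : ℕ)+1)`). -/
theorem zw_mul_pow_expansion (n : ℕ) (q : ℝ) (h0 : 0 < q) (h1 : q < 1) (i : Fin n) (m : ℕ) :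
    ∃ c : ℕ → Polynomial ℂ,
      (zEl n q i * wEl n q i) ^ m =
        ∑ k ∈ Finset.range (m + 1),
          (c k).eval ((q : ℂ) ^ 2) •
            (zEl n q i ^ k * wEl n q i ^ k * QEl n q ((i : ℕ) + 1) ^ (m - k)) :=
  zw_mul_pow_expansion_general n q i m

end
end

section
/- The number of pairs (λ, μ) ∈ ℤ_{≥0}^n × ℤ_{≥0}^n with |λ| = l, |μ| = m equals ∑_{k=0}^{min(l,m)} (l+m−2k+n−1)(l−k+n−2)!(m−k+n−2)! / ((l−k)!(m−k)!(n−1)!(n−2)!) for n ≥ 2, reflecting the decomposition Z̃_n(l,m) = ⊕_{k=0}^{min(l,m)} H̃_n(l−k, m−k). -/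
/-- `d_n(a,b) = (a+b+n−1)(a+n−2)!(b+n−2)!/(a! b! (n−1)! (n−2)!)`, the dimension of
`H̃_n(a,b)`, as a rational number. -/
noncomputable def dDim (n a b : ℕ) : ℚ :=
  ((a + b + n - 1) * (a + n - 2).factorial * (b + n - 2).factorial : ℕ) /
    ((a.factorial * b.factorial * (n - 1).factorial * (n - 2).factorial : ℕ) : ℚ)

/-!
Both sides are counted through `M(a) := n.multichoose a = C(a+n−1, a)`, the number of
`λ ∈ ℤ_{≥0}^n` with `|λ| = a` (stars and bars). The left side is `M(l) M(m)`, and for `n ≥ 2`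
one checks `d_n(a, 0) = M(a)` and `d_n(a+1, b+1) = M(a+1) M(b+1) − M(a) M(b)`, so the sum on the
right telescopes to `M(l) M(m)`.
-/

open Nat Finset

theorem natCard_sum_eq_multichoose (ι : Type*) [Fintype ι] (l : ℕ) :
    Nat.card {f : ι → ℕ // ∑ i, f i = l} = (Fintype.card ι).multichoose l := by
  classical
  have e : {f : ι → ℕ // ∑ i, f i = l} ≃ Sym ι l :=
    Equiv.subtypeEquiv (Finsupp.equivFunOnFinite.symm.trans Multiset.toFinsupp.symm.toEquiv)
      fun f ↦ by simp [Finsupp.card_toMultiset, Finsupp.sum_fintype]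
  rw [Nat.card_congr e, Nat.card_eq_fintype_card, Sym.card_sym_eq_multichoose]

theorem cast_multichoose_add_two (n a : ℕ) :
    ((n + 2).multichoose a : ℚ) = (a + n + 1)! / (a ! * (n + 1)!) := by
  rw [multichoose_eq, show n + 2 + a - 1 = a + (n + 1) by omega, cast_add_choose, add_assoc]

theorem dDim_add_two (n a b : ℕ) :
    dDim (n + 2) a b = (a + b + n + 1) * (a + n)! * (b + n)! / (a ! * b ! * (n + 1)! * n !) := by
  simp [dDim, show a + b + (n + 2) - 1 = a + b + n + 1 by omega,
    show a + (n + 2) - 2 = a + n by omega, show b + (n + 2) - 2 = b + n by omega]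

theorem dDim_comm (n a b : ℕ) : dDim n a b = dDim n b a := by
  unfold dDim
  rw [add_comm a b]
  congr 2 <;> ring

theorem dDim_zero_left (n b : ℕ) : dDim (n + 2) 0 b = (n + 2).multichoose b := by
  rw [dDim_add_two, cast_multichoose_add_two, zero_add, factorial_succ (b + n), factorial_succ n]
  push_cast
  field_simp
  ring

theorem dDim_succ_succ_add (n a b : ℕ) :
    dDim (n + 2) (a + 1) (b + 1) + (n + 2).multichoose a * (n + 2).multichoose b =
      (n + 2).multichoose (a + 1) * (n + 2).multichoose (b + 1) := by
  simp only [dDim_add_two, cast_multichoose_add_two, add_right_comm _ 1 n, factorial_succ]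
  push_cast
  field_simp
  ring

theorem sum_dDim_eq_multichoose_mul (n l m : ℕ) (hn : 2 ≤ n) :
    ∑ k ∈ range (min l m + 1), dDim n (l - k) (m - k) = n.multichoose l * n.multichoose m := by
  obtain ⟨n, rfl⟩ := Nat.exists_eq_add_of_le' hn
  induction l generalizing m with
  | zero => simp [dDim_zero_left]
  | succ l ih =>
    cases m with
    | zero => simp [dDim_comm, dDim_zero_left]
    | succ m =>
      rw [Nat.add_min_add_right, sum_range_succ', ← dDim_succ_succ_add, ← ih m, add_comm]
      simp

/-- The number of pairs `(λ, μ) ∈ ℤ_{≥0}^n × ℤ_{≥0}^n` with `|λ| = l`, `|μ| = m` equals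
`∑_{k=0}^{min(l,m)} d_n(l−k, m−k)` for `n ≥ 2`, reflecting the decomposition
`Z̃_n(l,m) = ⊕_{k=0}^{min(l,m)} H̃_n(l−k, m−k)`. -/
theorem card_pairs_eq_sum_dims (n l m : ℕ) (hn : 2 ≤ n) :
    (Nat.card {p : (Fin n → ℕ) × (Fin n → ℕ) //
        (∑ i, p.1 i) = l ∧ (∑ i, p.2 i) = m} : ℚ) =
      ∑ k ∈ Finset.range (min l m + 1), dDim n (l - k) (m - k) := by
  rw [Nat.card_congr (Equiv.subtypeProdEquivProd (p := fun f : Fin n → ℕ ↦ ∑ i, f i = l)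
      (q := fun f : Fin n → ℕ ↦ ∑ i, f i = m)), Nat.card_prod, natCard_sum_eq_multichoose,
    natCard_sum_eq_multichoose, Fintype.card_fin, Nat.cast_mul,
    sum_dDim_eq_multichoose_mul n l m hn]
end

section
/- Let A be a Hopf *-algebra, Z a *-algebra with right *-coaction δ : Z → Z ⊗ A that is unitary with respect to an inner product ⟨·,·⟩ on Z, and let C be a Hopf *-algebra with Hopf *-algebra epimorphism π : A → C having Haar functional h_C; set δ_C = (id ⊗ π)∘δ. If V ⊆ Z is a δ_C-subcomodule and φ ∈ Z is C-invariant (δ_C(φ) = φ ⊗ 1_C) and orthogonal to all C-invariant elements of V, then φ is orthogonal to all of V. -/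
open scoped TensorProduct

set_option maxHeartbeats 1000000
set_option synthInstance.maxHeartbeats 400000

/-- Let `A` be a Hopf *-algebra, `Z` a *-algebra with right *-coaction `δ : Z → Z ⊗ A` which
is unitary with respect to a (sesquilinear) inner product `B` on `Z` (via the extended
pairing `P` on `Z ⊗ A`, `P(v⊗a, w⊗b) = B v w • (b* a)`), and let `C` be a Hopf *-algebra
with a Hopf *-algebra epimorphism `π : A → C` having Haar functional `h`; set
`δ_C = (id ⊗ π) ∘ δ`.  If `V ⊆ Z` is a `δ_C`-subcomodule and `φ ∈ Z` is `C`-invariant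
(`δ_C(φ) = φ ⊗ 1`) and orthogonal to all `C`-invariant elements of `V`, then `φ` is
orthogonal to all of `V`. -/
theorem orthogonal_to_invariants_orthogonal_to_all
    {A C Z : Type*}
    [Ring A] [StarRing A] [HopfAlgebra ℂ A]
    [Ring C] [StarRing C] [HopfAlgebra ℂ C]
    [Ring Z] [Algebra ℂ Z] [StarRing Z]
    -- the inner product on Z: additive, linear in the first slot, conjugate-linear in the second
    (B : Z → Z → ℂ)
    (hBadd₁ : ∀ v v' w, B (v + v') w = B v w + B v' w)
    (hBadd₂ : ∀ v w w', B v (w + w') = B v w + B v w')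
    (hBsmul₁ : ∀ (c : ℂ) v w, B (c • v) w = c * B v w)
    (hBsmul₂ : ∀ (c : ℂ) v w, B v (c • w) = (starRingEnd ℂ) c * B v w)
    -- the right *-coaction δ of A on Z
    (δ : Z →ₐ[ℂ] Z ⊗[ℂ] A)
    (hδstar : ∀ (z : Z) (v : Z) (a : A), δ z = v ⊗ₜ a → δ (star z) = star v ⊗ₜ star a)
    (hδcounit : ∀ z : Z, (TensorProduct.rid ℂ Z)
      ((LinearMap.lTensor Z (Coalgebra.counit (R := ℂ) (A := A))) (δ z)) = z)
    (hδcoassoc : ∀ z : Z,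
      (LinearMap.rTensor A δ.toLinearMap) (δ z) =
        (TensorProduct.assoc ℂ Z A A).symm
          ((LinearMap.lTensor Z (Coalgebra.comul (R := ℂ))) (δ z)))
    -- the extended pairing on Z ⊗ A and unitarity of δ with respect to B
    (P : (Z ⊗[ℂ] A) → (Z ⊗[ℂ] A) → A)
    (hPadd₁ : ∀ x x' y, P (x + x') y = P x y + P x' y)
    (hPadd₂ : ∀ x y y', P x (y + y') = P x y + P x y')
    (hPpure : ∀ (v w : Z) (a b : A), P (v ⊗ₜ a) (w ⊗ₜ b) = B v w • (star b * a))
    (hUnitary : ∀ v w : Z, P (δ v) (δ w) = B v w • (1 : A))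
    -- the Hopf *-algebra epimorphism π : A → C
    (π : A →ₐ[ℂ] C)
    (hπsurj : Function.Surjective π)
    (hπstar : ∀ a, π (star a) = star (π a))
    (hπcomul : ∀ a, Coalgebra.comul (R := ℂ) (π a) =
      (TensorProduct.map π.toLinearMap π.toLinearMap) (Coalgebra.comul a))
    (hπcounit : ∀ a, Coalgebra.counit (R := ℂ) (π a) =
      Coalgebra.counit (R := ℂ) (A := A) a)
    -- the Haar functional on C
    (h : C →ₗ[ℂ] ℂ) (hone : h 1 = 1)
    (hstar : ∀ c : C, h (star c) = (starRingEnd ℂ) (h c))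
    (hinvL : ∀ c : C, (TensorProduct.lid ℂ C)
      ((LinearMap.rTensor C h) (Coalgebra.comul (R := ℂ) c)) = h c • 1)
    (hinvR : ∀ c : C, (TensorProduct.rid ℂ C)
      ((LinearMap.lTensor C h) (Coalgebra.comul (R := ℂ) c)) = h c • 1)
    -- the induced coaction δ_C = (id ⊗ π) ∘ δ
    (δC : Z →ₗ[ℂ] Z ⊗[ℂ] C)
    (hδC : δC = (LinearMap.lTensor Z π.toLinearMap) ∘ₗ δ.toLinearMap)
    -- V a δ_C-subcomodule of Z
    (V : Submodule ℂ Z)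
    (hV : ∀ v ∈ V, δC v ∈
      LinearMap.range (TensorProduct.map V.subtype (LinearMap.id (R := ℂ) (M := C))))
    -- φ is C-invariant and orthogonal to every C-invariant element of V
    (φ : Z) (hφ : δC φ = φ ⊗ₜ (1 : C))
    (hφperp : ∀ χ ∈ V, δC χ = χ ⊗ₜ (1 : C) → B φ χ = 0) :
    ∀ ψ ∈ V, B φ ψ = 0 := by
  classical
  -- basic consequences of additivity
  have hP0₁ : ∀ y, P 0 y = 0 := by
    intro y
    have h0 := hPadd₁ 0 0 y
    rw [add_zero] at h0
    exact (left_eq_add.mp h0)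
  have hP0₂ : ∀ x, P x 0 = 0 := by
    intro x
    have h0 := hPadd₂ x 0 0
    rw [add_zero] at h0
    exact (left_eq_add.mp h0)
  have hB0₂ : ∀ v, B v 0 = 0 := by
    intro v
    have h0 := hBadd₂ v 0 0
    rw [add_zero] at h0
    exact (left_eq_add.mp h0)
  have hPsum₂ : ∀ (x : Z ⊗[ℂ] A) (s : Finset (Z × A)) (f : Z × A → Z ⊗[ℂ] A),
      P x (∑ p ∈ s, f p) = ∑ p ∈ s, P x (f p) := by
    intro x s f
    induction s using Finset.induction_on with
    | empty => simpa using hP0₂ x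
    | insert _ _ hni ih => rw [Finset.sum_insert hni, Finset.sum_insert hni, hPadd₂, ih]
  have hBsum₂ : ∀ (v : Z) (s : Finset (Z × A)) (f : Z × A → Z),
      B v (∑ p ∈ s, f p) = ∑ p ∈ s, B v (f p) := by
    intro v s f
    induction s using Finset.induction_on with
    | empty => simpa using hB0₂ v
    | insert _ _ hni ih => rw [Finset.sum_insert hni, Finset.sum_insert hni, hBadd₂, ih]
  -- the averaging operator
  set T : Z →ₗ[ℂ] Z :=
    (TensorProduct.rid ℂ Z).toLinearMap ∘ₗ LinearMap.lTensor Z h ∘ₗ δC with hT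
  -- coassociativity of δC
  have hδCcoassoc : ∀ z : Z,
      (LinearMap.rTensor C δC) (δC z) =
        (TensorProduct.assoc ℂ Z C C).symm
          ((LinearMap.lTensor Z (Coalgebra.comul (R := ℂ))) (δC z)) := by
    intro z
    set F₁ : (Z ⊗[ℂ] A) ⊗[ℂ] A →ₗ[ℂ] (Z ⊗[ℂ] C) ⊗[ℂ] C :=
      TensorProduct.map (LinearMap.lTensor Z π.toLinearMap) π.toLinearMap with hF₁
    have e1 : (LinearMap.rTensor C δC) ∘ₗ (LinearMap.lTensor Z π.toLinearMap)
        = F₁ ∘ₗ (LinearMap.rTensor A δ.toLinearMap) := by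
      apply TensorProduct.ext'
      intro v a
      simp [hF₁, hδC]
    have e2 : F₁ ∘ₗ ((TensorProduct.assoc ℂ Z A A).symm.toLinearMap)
        = ((TensorProduct.assoc ℂ Z C C).symm.toLinearMap) ∘ₗ
            LinearMap.lTensor Z (TensorProduct.map π.toLinearMap π.toLinearMap) := by
      apply TensorProduct.ext'
      intro v y
      induction y using TensorProduct.induction_on with
      | zero => simp
      | tmul a b => simp [hF₁]
      | add y₁ y₂ ih₁ ih₂ =>
          simp only [TensorProduct.tmul_add, map_add, ih₁, ih₂]
    have e3 : (TensorProduct.map π.toLinearMap π.toLinearMap) ∘ₗ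
          (Coalgebra.comul (R := ℂ) (A := A))
        = (Coalgebra.comul (R := ℂ) (A := C)) ∘ₗ π.toLinearMap :=
      LinearMap.ext fun a => (hπcomul a).symm
    calc (LinearMap.rTensor C δC) (δC z)
        = ((LinearMap.rTensor C δC) ∘ₗ (LinearMap.lTensor Z π.toLinearMap)) (δ z) := by
          rw [hδC]; rfl
      _ = F₁ ((LinearMap.rTensor A δ.toLinearMap) (δ z)) := by rw [e1]; rfl
      _ = F₁ ((TensorProduct.assoc ℂ Z A A).symm
            ((LinearMap.lTensor Z (Coalgebra.comul (R := ℂ))) (δ z))) := by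
          rw [hδcoassoc z]
      _ = (TensorProduct.assoc ℂ Z C C).symm
            ((LinearMap.lTensor Z (TensorProduct.map π.toLinearMap π.toLinearMap))
              ((LinearMap.lTensor Z (Coalgebra.comul (R := ℂ))) (δ z))) := by
          have := congrArg (fun (f : Z ⊗[ℂ] (A ⊗[ℂ] A) →ₗ[ℂ] (Z ⊗[ℂ] C) ⊗[ℂ] C)
            => f ((LinearMap.lTensor Z (Coalgebra.comul (R := ℂ))) (δ z))) e2
          simpa using this
      _ = (TensorProduct.assoc ℂ Z C C).symm
            ((LinearMap.lTensor Z (Coalgebra.comul (R := ℂ))) (δC z)) := by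
          rw [hδC]
          congr 1
          rw [← LinearMap.comp_apply, ← LinearMap.lTensor_comp, e3,
            LinearMap.lTensor_comp, LinearMap.comp_apply]
          rfl
  -- T z is always C-invariant
  have hTinv : ∀ z : Z, δC (T z) = (T z) ⊗ₜ (1 : C) := by
    intro z
    have e4 : δC ∘ₗ (TensorProduct.rid ℂ Z).toLinearMap ∘ₗ LinearMap.lTensor Z h
        = (TensorProduct.rid ℂ (Z ⊗[ℂ] C)).toLinearMap ∘ₗ
            LinearMap.lTensor (Z ⊗[ℂ] C) h ∘ₗ LinearMap.rTensor C δC := by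
      apply TensorProduct.ext'
      intro v c
      simp [TensorProduct.rid_tmul]
    have e5 : (TensorProduct.rid ℂ (Z ⊗[ℂ] C)).toLinearMap ∘ₗ
          LinearMap.lTensor (Z ⊗[ℂ] C) h ∘ₗ (TensorProduct.assoc ℂ Z C C).symm.toLinearMap
        = LinearMap.lTensor Z
            ((TensorProduct.rid ℂ C).toLinearMap ∘ₗ LinearMap.lTensor C h) := by
      apply TensorProduct.ext'
      intro v y
      induction y using TensorProduct.induction_on with
      | zero => simp
      | tmul c d => simp [TensorProduct.rid_tmul, TensorProduct.smul_tmul]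
      | add y₁ y₂ ih₁ ih₂ =>
          simp only [TensorProduct.tmul_add, map_add, ih₁, ih₂]
    have e6 : ((TensorProduct.rid ℂ C).toLinearMap ∘ₗ LinearMap.lTensor C h) ∘ₗ
          (Coalgebra.comul (R := ℂ) (A := C))
        = LinearMap.toSpanSingleton ℂ C 1 ∘ₗ h := by
      apply LinearMap.ext
      intro c
      simpa using hinvR c
    have e7 : LinearMap.lTensor Z (LinearMap.toSpanSingleton ℂ C 1 ∘ₗ h)
        = ((TensorProduct.mk ℂ Z C).flip 1) ∘ₗ
            (TensorProduct.rid ℂ Z).toLinearMap ∘ₗ LinearMap.lTensor Z h := by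
      apply TensorProduct.ext'
      intro v c
      simp [LinearMap.toSpanSingleton_apply, TensorProduct.rid_tmul,
        TensorProduct.tmul_smul, TensorProduct.smul_tmul']
    calc δC (T z)
        = (δC ∘ₗ (TensorProduct.rid ℂ Z).toLinearMap ∘ₗ LinearMap.lTensor Z h) (δC z) := by
          rw [hT]; rfl
      _ = (TensorProduct.rid ℂ (Z ⊗[ℂ] C))
            ((LinearMap.lTensor (Z ⊗[ℂ] C) h) ((LinearMap.rTensor C δC) (δC z))) := by
          rw [e4]; rfl
      _ = (TensorProduct.rid ℂ (Z ⊗[ℂ] C))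
            ((LinearMap.lTensor (Z ⊗[ℂ] C) h) ((TensorProduct.assoc ℂ Z C C).symm
              ((LinearMap.lTensor Z (Coalgebra.comul (R := ℂ))) (δC z)))) := by
          rw [hδCcoassoc z]
      _ = (LinearMap.lTensor Z
            ((TensorProduct.rid ℂ C).toLinearMap ∘ₗ LinearMap.lTensor C h))
            ((LinearMap.lTensor Z (Coalgebra.comul (R := ℂ))) (δC z)) := by
          have := congrArg (fun (f : Z ⊗[ℂ] (C ⊗[ℂ] C) →ₗ[ℂ] Z ⊗[ℂ] C)
            => f ((LinearMap.lTensor Z (Coalgebra.comul (R := ℂ))) (δC z))) e5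
          simpa using this
      _ = (LinearMap.lTensor Z (LinearMap.toSpanSingleton ℂ C 1 ∘ₗ h)) (δC z) := by
          rw [← LinearMap.comp_apply, ← LinearMap.lTensor_comp, e6]
      _ = ((TensorProduct.mk ℂ Z C).flip 1)
            ((TensorProduct.rid ℂ Z) ((LinearMap.lTensor Z h) (δC z))) := by
          rw [e7]; rfl
      _ = (T z) ⊗ₜ (1 : C) := by rw [hT]; rfl
  -- T maps V into V
  have hTmem : ∀ z, z ∈ V → T z ∈ V := by
    intro z hz
    obtain ⟨u, hu⟩ := hV z hz
    have e8 : (TensorProduct.rid ℂ Z).toLinearMap ∘ₗ LinearMap.lTensor Z h ∘ₗ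
          TensorProduct.map V.subtype (LinearMap.id (R := ℂ) (M := C))
        = V.subtype ∘ₗ (TensorProduct.rid ℂ V).toLinearMap ∘ₗ LinearMap.lTensor V h := by
      apply TensorProduct.ext'
      intro v c
      simp [TensorProduct.rid_tmul]
    have : T z = V.subtype
        ((TensorProduct.rid ℂ V) ((LinearMap.lTensor (↥V) h) u)) := by
      have := congrArg (fun (f : (↥V) ⊗[ℂ] C →ₗ[ℂ] Z) => f u) e8
      simp only [LinearMap.comp_apply] at this
      rw [hT]
      simp only [LinearMap.comp_apply, ← hu] at this ⊢
      exact this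
    rw [this]
    exact ((TensorProduct.rid ℂ V) ((LinearMap.lTensor (↥V) h) u)).2
  -- main argument
  intro ψ hψ
  obtain ⟨S, hS⟩ := TensorProduct.exists_finset (δ ψ)
  -- sesquilinear pairing realized as a linear map on Z ⊗ C, depending on the expansion of δ ψ
  set L2 : Z →ₗ[ℂ] C →ₗ[ℂ] C := LinearMap.mk₂ ℂ
    (fun v c => ∑ p ∈ S, B v p.1 • (star (π p.2) * c))
    (by intro v v' c; simp [hBadd₁, add_smul, Finset.sum_add_distrib])
    (by intro r v c; simp [hBsmul₁, mul_smul, Finset.smul_sum])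
    (by intro v c c'; simp [mul_add, smul_add, Finset.sum_add_distrib])
    (by
      intro r v c
      rw [Finset.smul_sum]
      refine Finset.sum_congr rfl fun p _ => ?_
      rw [mul_smul_comm, smul_comm]) with hL2
  set L'' : Z ⊗[ℂ] C →ₗ[ℂ] C := TensorProduct.lift L2 with hL''
  have claimA : ∀ x : Z ⊗[ℂ] A, π (P x (δ ψ)) = L'' ((LinearMap.lTensor Z π.toLinearMap) x) := by
    intro x
    induction x using TensorProduct.induction_on with
    | zero => simp [hP0₁]
    | tmul v a =>
        rw [hS, hPsum₂]
        simp only [hPpure]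
        rw [map_sum]
        simp only [map_smul, map_mul, hπstar]
        simp [hL'', hL2]
    | add x y ihx ihy => rw [hPadd₁, map_add, ihx, ihy, map_add, map_add]
  have key1 : (B φ ψ) • (1 : C) = L'' (δC φ) := by
    have hA := claimA (δ φ)
    rw [hUnitary φ ψ, map_smul, map_one] at hA
    rw [hδC]
    exact hA
  have key3 : B φ ψ = ∑ p ∈ S, B φ p.1 * (starRingEnd ℂ) (h (π p.2)) := by
    have key2 : (B φ ψ) • (1 : C) = ∑ p ∈ S, B φ p.1 • star (π p.2) := by
      rw [key1, hφ]
      simp [hL'', hL2]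
    have := congrArg h key2
    simpa [hone, hstar, map_sum] using this
  have hTψ : T ψ = ∑ p ∈ S, h (π p.2) • p.1 := by
    rw [hT]
    simp only [LinearMap.comp_apply, hδC, AlgHom.toLinearMap_apply, hS, map_sum,
      LinearMap.lTensor_tmul, TensorProduct.rid_tmul]
    simp [TensorProduct.rid_tmul]
  have key4 : B φ ψ = B φ (T ψ) := by
    rw [hTψ, hBsum₂, key3]
    refine Finset.sum_congr rfl fun p _ => ?_
    rw [hBsmul₂, mul_comm]
  rw [key4]
  exact hφperp (T ψ) (hTmem ψ hψ) (hTinv ψ)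
end

section
/- Let A be a CQG algebra with Haar functional h, Z ⊆ A a right coideal *-subalgebra (Δ(Z) ⊆ Z ⊗ A), and V ⊆ Z a finite-dimensional subcomodule with orthonormal basis {e_i}_{i=1}^N for the inner product ⟨z,w⟩ = h(w* z). Then the element ζ̃ = ∑_{i=1}^N e_i e_i* ∈ Z satisfies Δ(ζ̃) = ζ̃ ⊗ 1_A, hence ζ̃ = h(ζ̃)·1 with h(ζ̃) = ∑_i ⟨e_i*, e_i*⟩ > 0. -/
open scoped TensorProduct Matrix

/-! Orthonormality provides functionals `h (e_j^* · _)` dual to the `e_i`, so coassociativity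
and the counit axiom can be read off coefficientwise: `U = (π_{ki})` is a corepresentation
matrix, hence `U · S(U) = 1` for the antipode `S`. Together with `U^* U = 1` this forces
`U^* = S(U)`, so also `U U^* = 1`, and this is exactly what collapses
`Δ(∑ e_i e_i^*) = ∑_{k,l} e_k e_l^* ⊗ (U U^*)_{kl}` to `ζ̃ ⊗ 1`. Right invariance of `h` then
gives `ζ̃ = h(ζ̃)·1`, and `h(ζ̃) = ∑ h((e_i^*)^* e_i^*) > 0` by faithfulness of `h`. -/

namespace TensorProduct

variable {R C M ι : Type*} [CommSemiring R] [AddCommMonoid C] [Module R C]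
  [AddCommMonoid M] [Module R M] [Fintype ι] [DecidableEq ι]

theorem eq_of_sum_tmul_eq_of_dual {f : ι → C →ₗ[R] R} {e : ι → C}
    (hfe : ∀ j l, f j (e l) = if l = j then 1 else 0) {x y : ι → M}
    (hxy : ∑ k, e k ⊗ₜ[R] x k = ∑ k, e k ⊗ₜ[R] y k) : x = y := by
  have coeff (z : ι → M) (j : ι) :
      TensorProduct.lid R M ((f j).rTensor M (∑ k, e k ⊗ₜ[R] z k)) = z j := by
    simp [hfe]
  funext j
  rw [← coeff x, hxy, coeff]

end TensorProduct

namespace Coalgebra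

variable {R C ι : Type*} [CommSemiring R] [AddCommMonoid C] [Module R C] [Coalgebra R C]
  [Fintype ι] [DecidableEq ι] {f : ι → C →ₗ[R] R} {e : ι → C} {π : ι → ι → C}

theorem comul_matrixCoeff (hfe : ∀ j l, f j (e l) = if l = j then 1 else 0)
    (hcomod : ∀ i, comul (e i) = ∑ k, e k ⊗ₜ[R] π k i) (j i : ι) :
    comul (π j i) = ∑ k, π j k ⊗ₜ[R] π k i := by
  have hcoassoc := coassoc_apply (R := R) (e i)
  simp only [hcomod, map_sum, LinearMap.rTensor_tmul, LinearMap.lTensor_tmul,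
    TensorProduct.sum_tmul, _root_.TensorProduct.assoc_tmul] at hcoassoc
  rw [Finset.sum_comm] at hcoassoc
  simp only [← TensorProduct.tmul_sum] at hcoassoc
  exact congrFun (TensorProduct.eq_of_sum_tmul_eq_of_dual hfe hcoassoc.symm) j

theorem counit_matrixCoeff (hfe : ∀ j l, f j (e l) = if l = j then 1 else 0)
    (hcomod : ∀ i, comul (e i) = ∑ k, e k ⊗ₜ[R] π k i) (j i : ι) :
    counit (π j i) = if j = i then (1 : R) else 0 := by
  have hcounit := lTensor_counit_comul (R := R) (e i)
  rw [hcomod, map_sum] at hcounit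
  have hdiag : e i ⊗ₜ[R] (1 : R) = ∑ k, e k ⊗ₜ[R] (if k = i then (1 : R) else 0) := by
    simp [TensorProduct.tmul_ite]
  simp only [LinearMap.lTensor_tmul, hdiag] at hcounit
  exact congrFun (TensorProduct.eq_of_sum_tmul_eq_of_dual hfe hcounit) j

end Coalgebra

namespace HopfAlgebra

variable {R A ι : Type*} [CommSemiring R] [Semiring A] [HopfAlgebra R A]
  [Fintype ι] [DecidableEq ι] {π : ι → ι → A}

theorem matrix_mul_map_antipode_eq_one
    (hcomul : ∀ j i, Coalgebra.comul (π j i) = ∑ k, π j k ⊗ₜ[R] π k i)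
    (hcounit : ∀ j i, Coalgebra.counit (π j i) = if j = i then (1 : R) else 0) :
    Matrix.of π * (Matrix.of π).map (antipode R) = 1 := by
  ext k l
  have hanti := mul_antipode_lTensor_comul_apply (R := R) (π k l)
  simpa [hcomul, hcounit, Matrix.mul_apply, Matrix.one_apply, apply_ite (algebraMap R A)]
    using hanti

end HopfAlgebra

namespace Bialgebra

variable {R A ι : Type*} [CommSemiring R] [Semiring A] [Bialgebra R A]

theorem comul_sum_mul_eq_tmul_one [Fintype ι] [DecidableEq ι] {e e' : ι → A} {π ρ : ι → ι → A}
    (he : ∀ i, Coalgebra.comul (e i) = ∑ k, e k ⊗ₜ[R] π k i)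
    (he' : ∀ i, Coalgebra.comul (e' i) = ∑ k, e' k ⊗ₜ[R] ρ k i)
    (hπρ : Matrix.of π * (Matrix.of ρ)ᵀ = 1) :
    Coalgebra.comul (∑ i, e i * e' i) = (∑ i, e i * e' i) ⊗ₜ[R] (1 : A) := by
  have hπρ' (k l : ι) : ∑ i, π k i * ρ l i = if k = l then 1 else 0 := by
    simpa [Matrix.mul_apply, Matrix.one_apply] using congrFun (congrFun hπρ k) l
  calc Coalgebra.comul (∑ i, e i * e' i)
      = ∑ i, ∑ l, ∑ k, (e k * e' l) ⊗ₜ[R] (π k i * ρ l i) := by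
        simp [comul_mul, he, he', Finset.sum_mul, Finset.mul_sum,
          Algebra.TensorProduct.tmul_mul_tmul]
    _ = ∑ l, ∑ k, (e k * e' l) ⊗ₜ[R] ∑ i, π k i * ρ l i := by
        simp only [TensorProduct.tmul_sum]
        rw [Finset.sum_comm]
        exact Finset.sum_congr rfl fun _ _ => Finset.sum_comm
    _ = (∑ i, e i * e' i) ⊗ₜ[R] (1 : A) := by
        simp [hπρ', TensorProduct.tmul_ite, TensorProduct.sum_tmul]

theorem eq_smul_one_of_comul_eq_tmul_one (h : A →ₗ[R] R) (hone : h 1 = 1)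
    (hinvR : ∀ a : A, (_root_.TensorProduct.rid R A) (h.lTensor A (Coalgebra.comul a)) = h a • 1)
    {a : A} (ha : Coalgebra.comul a = a ⊗ₜ[R] (1 : A)) : a = h a • 1 := by
  simpa [ha, hone] using hinvR a

end Bialgebra

theorem invariant_element_of_subcomodule_general
    {A : Type*} [Ring A] [StarRing A] [HopfAlgebra ℂ A]
    (h : A →ₗ[ℂ] ℂ) (hone : h 1 = 1)
    (hinvR : ∀ a : A, (TensorProduct.rid ℂ A)
      ((LinearMap.lTensor A h) (Coalgebra.comul (R := ℂ) a)) = h a • 1)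
    (hpos : ∀ a : A, a ≠ 0 → ∃ r : ℝ, 0 < r ∧ h (star a * a) = r)
    (N : ℕ) (hN : 1 ≤ N) (e : Fin N → A)
    (horth : ∀ i j, h (star (e j) * e i) = if i = j then 1 else 0)
    (π : Fin N → Fin N → A)
    (hcomod : ∀ i, Coalgebra.comul (R := ℂ) (e i) = ∑ k, e k ⊗ₜ[ℂ] π k i)
    (hcomodStar : ∀ i, Coalgebra.comul (R := ℂ) (star (e i)) =
      ∑ k, star (e k) ⊗ₜ[ℂ] star (π k i))
    (hunitary : ∀ i j, (∑ k, star (π k i) * π k j) = if i = j then (1 : A) else 0) :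
    Coalgebra.comul (R := ℂ) (∑ i, e i * star (e i)) =
        (∑ i, e i * star (e i)) ⊗ₜ[ℂ] (1 : A) ∧
      (∑ i, e i * star (e i)) = h (∑ i, e i * star (e i)) • (1 : A) ∧
      h (∑ i, e i * star (e i)) = ∑ i, h (e i * star (e i)) ∧
      ∃ r : ℝ, 0 < r ∧ h (∑ i, e i * star (e i)) = r := by
  set U := Matrix.of π
  have hdual (j l : Fin N) : (h ∘ₗ LinearMap.mulLeft ℂ (star (e j))) (e l) =
      if l = j then 1 else 0 := horth l j
  have hUS : U * U.map (HopfAlgebra.antipode ℂ) = 1 :=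
    HopfAlgebra.matrix_mul_map_antipode_eq_one (Coalgebra.comul_matrixCoeff hdual hcomod)
      (Coalgebra.counit_matrixCoeff hdual hcomod)
  have hUstarU : Uᴴ * U = 1 := by
    ext i j
    simpa [U, Matrix.mul_apply, Matrix.one_apply] using hunitary i j
  have hUUstar : U * Uᴴ = 1 := by rwa [left_inv_eq_right_inv hUstarU hUS]
  have hζ := Bialgebra.comul_sum_mul_eq_tmul_one hcomod hcomodStar hUUstar
  have hne (i : Fin N) : star (e i) ≠ 0 := fun hi => by
    simpa [star_eq_zero.mp hi] using horth i i
  choose r hr hhr using fun i => hpos (star (e i)) (hne i)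
  simp only [star_star] at hhr
  have : Nonempty (Fin N) := ⟨⟨0, hN⟩⟩
  refine ⟨hζ, Bialgebra.eq_smul_one_of_comul_eq_tmul_one h hone hinvR hζ, map_sum h _ _,
    ∑ i, r i, Finset.sum_pos (fun i _ => hr i) Finset.univ_nonempty, ?_⟩
  simp only [map_sum, hhr, Complex.ofReal_sum]

/-- Let `A` be a CQG algebra (a Hopf *-algebra) with Haar functional `h` (normalized,
bi-invariant, positive), `Z ⊆ A` a right coideal *-subalgebra, and `e_1, …, e_N ∈ Z`
(`N ≥ 1`) an orthonormal family for `⟨z,w⟩ = h(w* z)` spanning a finite-dimensional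
subcomodule `V` with matrix coefficients `π` (so `Δ(e_i) = ∑_k e_k ⊗ π_{ki}`, `Δ` being a
*-homomorphism, and the corepresentation unitary: `∑_k π_{ki}* π_{kj} = δ_{ij} 1`).
Then `ζ̃ = ∑_i e_i e_i*` satisfies `Δ(ζ̃) = ζ̃ ⊗ 1`, hence `ζ̃ = h(ζ̃)·1` with
`h(ζ̃) = ∑_i ⟨e_i*, e_i*⟩ > 0`. -/
theorem invariant_element_of_subcomodule
    {A : Type*} [Ring A] [StarRing A] [HopfAlgebra ℂ A]
    (h : A →ₗ[ℂ] ℂ) (hone : h 1 = 1)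
    (hinvL : ∀ a : A, (TensorProduct.lid ℂ A)
      ((LinearMap.rTensor A h) (Coalgebra.comul (R := ℂ) a)) = h a • 1)
    (hinvR : ∀ a : A, (TensorProduct.rid ℂ A)
      ((LinearMap.lTensor A h) (Coalgebra.comul (R := ℂ) a)) = h a • 1)
    (hpos : ∀ a : A, a ≠ 0 → ∃ r : ℝ, 0 < r ∧ h (star a * a) = r)
    (Z : Subalgebra ℂ A) (hZstar : ∀ z ∈ Z, star z ∈ Z)
    (hZcoideal : ∀ z ∈ Z, Coalgebra.comul (R := ℂ) z ∈
      LinearMap.range (TensorProduct.map (Subalgebra.toSubmodule Z).subtype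
        (LinearMap.id (R := ℂ) (M := A))))
    (N : ℕ) (hN : 1 ≤ N) (e : Fin N → A) (he : ∀ i, e i ∈ Z)
    (horth : ∀ i j, h (star (e j) * e i) = if i = j then 1 else 0)
    (π : Fin N → Fin N → A)
    (hcomod : ∀ i, Coalgebra.comul (R := ℂ) (e i) = ∑ k, e k ⊗ₜ[ℂ] π k i)
    (hcomodStar : ∀ i, Coalgebra.comul (R := ℂ) (star (e i)) =
      ∑ k, star (e k) ⊗ₜ[ℂ] star (π k i))
    (hunitary : ∀ i j, (∑ k, star (π k i) * π k j) = if i = j then (1 : A) else 0) :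
    Coalgebra.comul (R := ℂ) (∑ i, e i * star (e i)) =
        (∑ i, e i * star (e i)) ⊗ₜ[ℂ] (1 : A) ∧
      (∑ i, e i * star (e i)) = h (∑ i, e i * star (e i)) • (1 : A) ∧
      h (∑ i, e i * star (e i)) = ∑ i, h (e i * star (e i)) ∧
      ∃ r : ℝ, 0 < r ∧ h (∑ i, e i * star (e i)) = r :=
  invariant_element_of_subcomodule_general h hone hinvR hpos N hN e horth π hcomod hcomodStar
    hunitary
end

section
/- Suppose φ is a nonzero element of the commutative subalgebra spanned by {z^λ w^λ : λ ∈ ℤ_{≥0}^n} of Z̃_n (equal to ℂ[Q_1,…,Q_{n-1}]), written as a polynomial φ(Q_1,…,Q_{n-1}). Then the invariant functional satisfies h_n(φ) = ((q²;q²)_{n-1}/(1−q²)^{n-1}) ∫_0^1 ∫_0^{Q_{n-1}} ⋯ ∫_0^{Q_2} φ(Q_1,…,Q_{n-1}) d_{q²}Q_1 ⋯ d_{q²}Q_{n-1}, where h_n is determined on basis monomials by h_n(z^λ w^μ) = δ_{λμ} q^{|λ|² + ∑_i (2(i−1)λ_i − λ_i²)} (q²;q²)_{λ_1}⋯(q²;q²)_{λ_n}(q²;q²)_{n-1}/(q²;q²)_{|λ|+n-1}.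 -/
/-!
Both sides are linear in the coefficients, so it suffices to integrate one monomial `z^λ w^λ`,
and the variables `Q_1, Q_2, …` can be integrated out one at a time. At each step the integrand
in `Q_k` is `Q_k^a (Q_k/Q_{k+1}; q^{-2})_β` times factors free of `Q_k`, and its Jackson
`q²`-integral over `[0, Q_{k+1}]` is `Q_{k+1}^{a+1}` times a q-beta value: the first `β` terms of
the Jackson sum vanish and the rest is the q-binomial series
`∑_m x^m (p^{m+1}; p)_β = (p; p)_β / (x; p)_{β+1}` with `p = q²`. The product of these q-beta values telescopes,
through `(p; p)_a (p^{a+1}; p)_{β+1} = (p; p)_{a+β+1}`, to the value of `h_n` on `z^λ w^λ`.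
-/

/-- The (complex-valued) Jackson q-integral `∫_0^c f(x) d_q x = c(1-q) ∑_{k=0}^∞ f(c q^k) q^k`. -/
noncomputable def jacksonIntegralC (q c : ℝ) (f : ℝ → ℂ) : ℂ :=
  (c : ℂ) * (1 - (q : ℂ)) * ∑' k : ℕ, f (c * q ^ k) * (q : ℂ) ^ k

/-- Iterated (nested) Jackson q-integral: `nestIntC q m F` integrates the variables
`Q_1, …, Q_m` of `F`, each `Q_j` running from `0` to `Q_{j+1}`. -/
noncomputable def nestIntC (q : ℝ) : ℕ → ((ℕ → ℝ) → ℂ) → ((ℕ → ℝ) → ℂ)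
  | 0, F => F
  | (m + 1), F => fun Q =>
      jacksonIntegralC q (Q (m + 2)) (fun x => nestIntC q m F (Function.update Q (m + 1) x))

/-- The full invariant integral on `ℂ[Q_1,…,Q_{n-1}]` realized as an iterated Jackson
`q²`-integral over the nested simplex `0 ≤ Q_1 ≤ ⋯ ≤ Q_{n-1} ≤ 1`. -/
noncomputable def hnInt (q : ℝ) (n : ℕ) (F : (ℕ → ℝ) → ℂ) : ℂ :=
  jacksonIntegralC (q ^ 2) 1
    (fun x => nestIntC (q ^ 2) (n - 2) F (Function.update (fun _ => 0) (n - 1) x))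

/-- The basis monomial `z^λ w^λ` of `ℂ[Q_1,…,Q_{n-1}] ⊆ Z̃_n`, written as a function of the
commuting variables `Q_1, …, Q_{n-1}` (with the convention `Q_n = 1`):
`z^λ w^λ = Q_1^{λ_1}⋯Q_{n-1}^{λ_{n-1}} (Q_1/Q_2; q^{-2})_{λ_2} ⋯ (Q_{n-1}; q^{-2})_{λ_n}`. -/
noncomputable def monoQ (q : ℝ) (n : ℕ) (lam : ℕ → ℕ) (Q : ℕ → ℝ) : ℂ :=
  (∏ i ∈ Finset.Icc 1 (n - 1), ((Q i : ℂ)) ^ lam i) *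
    ∏ i ∈ Finset.Icc 2 n, ∏ j ∈ Finset.range (lam i),
      (1 - ((Q (i - 1) : ℂ) / (if i = n then 1 else (Q i : ℂ))) * (((q : ℂ) ^ 2)⁻¹) ^ j)

/-- The value of the invariant functional `h_n` on the basis monomial `z^λ w^λ`:
`h_n(z^λ w^λ) = q^{|λ|² + ∑_i (2(i−1)λ_i − λ_i²)} (q²;q²)_{λ_1}⋯(q²;q²)_{λ_n}(q²;q²)_{n-1} /
(q²;q²)_{|λ|+n-1}`. -/
noncomputable def hnVal (q : ℝ) (n : ℕ) (lam : ℕ → ℕ) : ℂ :=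
  (q : ℂ) ^ ((((∑ i ∈ Finset.Icc 1 n, lam i) ^ 2 : ℕ) : ℤ) +
      ∑ i ∈ Finset.Icc 1 n, (((2 * (i - 1) * lam i : ℕ) : ℤ) - ((lam i ^ 2 : ℕ) : ℤ))) *
    (∏ i ∈ Finset.Icc 1 n, ∏ j ∈ Finset.range (lam i), (1 - (q : ℂ) ^ 2 * ((q : ℂ) ^ 2) ^ j)) *
    (∏ j ∈ Finset.range (n - 1), (1 - (q : ℂ) ^ 2 * ((q : ℂ) ^ 2) ^ j)) /
    (∏ j ∈ Finset.range ((∑ i ∈ Finset.Icc 1 n, lam i) + n - 1),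
      (1 - (q : ℂ) ^ 2 * ((q : ℂ) ^ 2) ^ j))

open Finset

noncomputable section

/-- The q-Pochhammer symbol `(a; p)_n`. -/
def qPochhammer (a p : ℂ) (n : ℕ) : ℂ :=
  ∏ j ∈ range n, (1 - a * p ^ j)

theorem qPochhammer_succ (a p : ℂ) (n : ℕ) :
    qPochhammer a p (n + 1) = qPochhammer a p n * (1 - a * p ^ n) :=
  prod_range_succ _ n

theorem qPochhammer_succ' (a p : ℂ) (n : ℕ) :
    qPochhammer a p (n + 1) = (1 - a) * qPochhammer (a * p) p n := by
  rw [qPochhammer, prod_range_succ', mul_comm]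
  simp only [qPochhammer, pow_zero, mul_one, pow_succ, mul_assoc, mul_comm p]

theorem qPochhammer_add (a p : ℂ) (m n : ℕ) :
    qPochhammer a p (m + n) = qPochhammer a p m * qPochhammer (a * p ^ m) p n := by
  simp only [qPochhammer, prod_range_add, pow_add, mul_assoc]

theorem qPochhammer_ne_zero {a p : ℂ} (ha : ‖a‖ < 1) (hp : ‖p‖ ≤ 1) (n : ℕ) :
    qPochhammer a p n ≠ 0 := by
  refine prod_ne_zero_iff.2 fun j _ => sub_ne_zero.2 fun h => ?_
  have : ‖a * p ^ j‖ < 1 := by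
    rw [norm_mul, norm_pow]
    exact (mul_le_of_le_one_right (norm_nonneg a) (pow_le_one₀ (norm_nonneg p) hp)).trans_lt ha
  simp [← h] at this

theorem qPochhammer_pow_inv_eq_zero {p : ℂ} (hp : p ≠ 0) {k n : ℕ} (hkn : k < n) :
    qPochhammer (p ^ k) p⁻¹ n = 0 :=
  prod_eq_zero (mem_range.2 hkn) (by rw [inv_pow, mul_inv_cancel₀ (pow_ne_zero _ hp), sub_self])

theorem qPochhammer_mul_pow_inv {p : ℂ} (hp : p ≠ 0) (a : ℂ) (n : ℕ) :
    qPochhammer (a * p ^ n) p⁻¹ n = qPochhammer (a * p) p n := by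
  rw [qPochhammer, ← prod_range_reflect]
  refine prod_congr rfl fun j hj => ?_
  have hjn := mem_range.1 hj
  rw [show p ^ n = p ^ (n - 1 - j) * (p * p ^ j) by rw [← pow_succ', ← pow_add]; congr 1; omega,
    inv_pow]
  field_simp

theorem hasSum_pow_mul_qPochhammer {p : ℂ} (hp : ‖p‖ < 1) (β : ℕ) {x : ℂ} (hx : ‖x‖ < 1) :
    HasSum (fun m => x ^ m * qPochhammer (p ^ (m + 1)) p β)
      (qPochhammer p p β / qPochhammer x p (β + 1)) := by
  induction β generalizing x with
  | zero => simpa [qPochhammer, div_eq_mul_inv] using hasSum_geometric_of_norm_lt_one hx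
  | succ β ih =>
    have hxp : ‖x * p‖ < 1 := by
      rw [norm_mul]; exact (mul_le_of_le_one_right (norm_nonneg x) hp.le).trans_lt hx
    have hsum : qPochhammer p p (β + 1) / qPochhammer x p (β + 1 + 1) =
        qPochhammer p p β / qPochhammer x p (β + 1) -
          p ^ (β + 1) * (qPochhammer p p β / qPochhammer (x * p) p (β + 1)) := by
      have h1 : (1 : ℂ) - x ≠ 0 := sub_ne_zero.2 fun h => by simp [← h] at hx
      have h2 := qPochhammer_ne_zero hxp hp.le β
      have h3 : (1 : ℂ) - x * (p * p ^ β) ≠ 0 := by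
        have := qPochhammer_ne_zero hxp hp.le (β + 1)
        rw [qPochhammer_succ, mul_assoc] at this
        exact right_ne_zero_of_mul this
      rw [qPochhammer_succ' x p (β + 1), qPochhammer_succ' x p β, qPochhammer_succ (x * p) p β,
        qPochhammer_succ p p β, pow_succ', mul_assoc x]
      generalize qPochhammer (x * p) p β = D at h2 ⊢
      generalize p * p ^ β = r at h3 ⊢
      rw [eq_sub_iff_add_eq, mul_div_assoc', div_add_div _ _ (by simp [*]) (by simp [*]),
        div_eq_div_iff (by simp [*]) (by simp [*])]
      ring
    -- `(p^{m+1}; p)_{β+1} = (p^{m+1}; p)_β - p^{β+1} p^m (p^{m+1}; p)_β`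
    rw [hsum]
    exact ((ih hx).sub ((ih hxp).mul_left (p ^ (β + 1)))).congr_fun fun m => by
      rw [qPochhammer_succ]; ring

theorem hasSum_pow_mul_qPochhammer_pow_inv {p : ℂ} (hp0 : p ≠ 0) (hp : ‖p‖ < 1) (α β : ℕ) :
    HasSum (fun k => (p ^ (α + 1)) ^ k * qPochhammer (p ^ k) p⁻¹ β)
      (p ^ (β * (α + 1)) * qPochhammer p p β / qPochhammer (p ^ (α + 1)) p (β + 1)) := by
  have hx : ‖p ^ (α + 1)‖ < 1 := by
    rw [norm_pow]; exact pow_lt_one₀ (norm_nonneg p) hp (Nat.succ_ne_zero α)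
  -- The first `β` terms vanish; reversing the product turns the rest into the q-binomial series.
  have hshift := (hasSum_pow_mul_qPochhammer hp β hx).mul_left (p ^ (β * (α + 1)))
  have hhead : ∑ k ∈ range β, (p ^ (α + 1)) ^ k * qPochhammer (p ^ k) p⁻¹ β = 0 :=
    sum_eq_zero fun k hk => by rw [qPochhammer_pow_inv_eq_zero hp0 (mem_range.1 hk), mul_zero]
  rw [← add_zero (_ / _), ← hhead, ← hasSum_nat_add_iff, mul_div_assoc]
  refine hshift.congr_fun fun m => ?_
  rw [pow_add p m β, qPochhammer_mul_pow_inv hp0, ← pow_succ, ← pow_mul, mul_comm (α + 1)]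
  ring

/-- The value of `∫_0^1 x^a (x; P⁻¹)_β d_P x` (`jacksonIntegralC_pow_mul_qPochhammer`). -/
def qBeta (P : ℂ) (a β : ℕ) : ℂ :=
  (1 - P) * P ^ (β * (a + 1)) * qPochhammer P P β / qPochhammer (P ^ (a + 1)) P (β + 1)

theorem qBeta_mul_qPochhammer {P : ℂ} (hP : ‖P‖ < 1) (a β : ℕ) :
    qBeta P a β * qPochhammer P P (a + β + 1) =
      (1 - P) * P ^ (β * (a + 1)) * qPochhammer P P β * qPochhammer P P a := by
  have hne : qPochhammer (P ^ (a + 1)) P (β + 1) ≠ 0 := by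
    refine qPochhammer_ne_zero ?_ hP.le _
    rw [norm_pow]; exact pow_lt_one₀ (norm_nonneg P) hP (Nat.succ_ne_zero a)
  rw [qBeta, add_assoc, qPochhammer_add P P a, ← pow_succ']
  field_simp

section Jackson

variable {p : ℝ}

theorem jacksonIntegralC_const_mul (c : ℝ) (a : ℂ) (f : ℝ → ℂ) :
    jacksonIntegralC p c (fun x => a * f x) = a * jacksonIntegralC p c f := by
  simp only [jacksonIntegralC, mul_assoc, tsum_mul_left]
  ring

theorem jacksonIntegralC_finsetSum {ι : Type*} (c : ℝ) (s : Finset ι) (f : ι → ℝ → ℂ)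
    (hf : ∀ i ∈ s, Summable fun k : ℕ => f i (c * p ^ k) * (p : ℂ) ^ k) :
    jacksonIntegralC p c (fun x => ∑ i ∈ s, f i x) = ∑ i ∈ s, jacksonIntegralC p c (f i) := by
  simp only [jacksonIntegralC, sum_mul, ← mul_sum]
  rw [Summable.tsum_finsetSum hf]

theorem hasSum_jackson_pow_mul_qPochhammer (hp0 : p ≠ 0) (hp1 : |p| < 1) {c : ℝ} (hc : c ≠ 0)
    (α β : ℕ) :
    HasSum (fun k : ℕ => ((c * p ^ k : ℝ) : ℂ) ^ α * qPochhammer ((c * p ^ k : ℝ) / c) (p : ℂ)⁻¹ β *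
        (p : ℂ) ^ k)
      ((c : ℂ) ^ α * ((p : ℂ) ^ (β * (α + 1)) * qPochhammer p p β /
        qPochhammer ((p : ℂ) ^ (α + 1)) p (β + 1))) := by
  have hp : ‖(p : ℂ)‖ < 1 := by rwa [Complex.norm_real, Real.norm_eq_abs]
  refine ((hasSum_pow_mul_qPochhammer_pow_inv (Complex.ofReal_ne_zero.2 hp0) hp α β).mul_left
    ((c : ℂ) ^ α)).congr_fun fun k => ?_
  have hc' : (c : ℂ) ≠ 0 := Complex.ofReal_ne_zero.2 hc
  push_cast
  rw [mul_div_cancel_left₀ _ hc']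
  ring

theorem jacksonIntegralC_pow_mul_qPochhammer (hp0 : p ≠ 0) (hp1 : |p| < 1) (c : ℝ) (α β : ℕ) :
    jacksonIntegralC p c (fun x => (x : ℂ) ^ α * qPochhammer (x / c) (p : ℂ)⁻¹ β) =
      (c : ℂ) ^ (α + 1) * qBeta p α β := by
  rcases eq_or_ne c 0 with rfl | hc
  · simp [jacksonIntegralC]
  rw [jacksonIntegralC, (hasSum_jackson_pow_mul_qPochhammer hp0 hp1 hc α β).tsum_eq, qBeta]
  ring

theorem jacksonIntegralC_sum_mul_pow_mul_qPochhammer (hp0 : p ≠ 0) (hp1 : |p| < 1) (c : ℝ)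
    {ι : Type*} (s : Finset ι) (w : ι → ℂ) (α β : ι → ℕ) :
    jacksonIntegralC p c
        (fun x => ∑ i ∈ s, w i * ((x : ℂ) ^ α i * qPochhammer (x / c) (p : ℂ)⁻¹ (β i))) =
      ∑ i ∈ s, w i * ((c : ℂ) ^ (α i + 1) * qBeta p (α i) (β i)) := by
  rcases eq_or_ne c 0 with rfl | hc
  · simp [jacksonIntegralC]
  rw [jacksonIntegralC_finsetSum _ _ _ fun i _ =>
    ((hasSum_jackson_pow_mul_qPochhammer hp0 hp1 hc (α i) (β i)).mul_left (w i)).summable.congr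
      fun k => by ring]
  simp only [jacksonIntegralC_const_mul, jacksonIntegralC_pow_mul_qPochhammer hp0 hp1]

end Jackson

/-- The factors of `z^λ w^λ` involving only `Q_k, …, Q_n`, in the variables where `Q_n = 1`. -/
def monoTail (p : ℝ) (n : ℕ) (lam : ℕ → ℕ) (k : ℕ) (Q : ℕ → ℝ) : ℂ :=
  ∏ i ∈ Icc (k + 1) n, (Q i : ℂ) ^ lam i * qPochhammer (Q (i - 1) / Q i) (p : ℂ)⁻¹ (lam i)

/-- The degree in `Q_{m+1}` once `Q_1, …, Q_m` are integrated out. -/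
def integratedDegree (lam : ℕ → ℕ) (m : ℕ) : ℕ :=
  ∑ i ∈ Icc 1 (m + 1), lam i + m

/-- `z^λ w^λ` with `Q_1, …, Q_m` integrated out, in the variables where `Q_n = 1`. -/
def integratedMono (p : ℝ) (n : ℕ) (lam : ℕ → ℕ) (m : ℕ) (Q : ℕ → ℝ) : ℂ :=
  (∏ j ∈ range m, qBeta p (integratedDegree lam j) (lam (j + 2))) *
    ((Q (m + 1) : ℂ) ^ integratedDegree lam m * monoTail p n lam (m + 1) Q)

section Monomials

variable {p : ℝ} {n : ℕ} (lam : ℕ → ℕ)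

theorem monoTail_succ {k : ℕ} (hk : k < n) (Q : ℕ → ℝ) :
    monoTail p n lam k Q = (Q (k + 1) : ℂ) ^ lam (k + 1) *
      qPochhammer (Q k / Q (k + 1)) (p : ℂ)⁻¹ (lam (k + 1)) * monoTail p n lam (k + 1) Q := by
  rw [monoTail, ← insert_Icc_add_one_left_eq_Icc (by omega : k + 1 ≤ n), prod_insert (by simp),
    Nat.add_sub_cancel]
  rfl

theorem monoTail_update {j k : ℕ} (hjk : j ≤ k) (Q : ℕ → ℝ) (x : ℝ) :
    monoTail p n lam (k + 1) (Function.update Q j x) = monoTail p n lam (k + 1) Q := by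
  refine prod_congr rfl fun i hi => ?_
  have hi := mem_Icc.1 hi
  rw [Function.update_of_ne (by omega), Function.update_of_ne (by omega)]

theorem integratedDegree_succ (m : ℕ) :
    integratedDegree lam (m + 1) = integratedDegree lam m + lam (m + 2) + 1 := by
  rw [integratedDegree, integratedDegree, sum_Icc_succ_top (by omega)]
  ring

theorem integratedMono_update {m : ℕ} (hm : m + 2 ≤ n) (Q : ℕ → ℝ) (x : ℝ) :
    integratedMono p n lam m (Function.update Q (m + 1) x) =
      (∏ j ∈ range m, qBeta p (integratedDegree lam j) (lam (j + 2))) *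
          (Q (m + 2) : ℂ) ^ lam (m + 2) * monoTail p n lam (m + 2) Q *
        ((x : ℂ) ^ integratedDegree lam m *
          qPochhammer (x / Q (m + 2)) (p : ℂ)⁻¹ (lam (m + 2))) := by
  rw [integratedMono, monoTail_succ lam (by omega), monoTail_update lam le_rfl,
    Function.update_self, Function.update_of_ne (by omega)]
  ring

theorem integratedMono_succ (m : ℕ) (Q : ℕ → ℝ) :
    integratedMono p n lam (m + 1) Q =
      (∏ j ∈ range m, qBeta p (integratedDegree lam j) (lam (j + 2))) *
          (Q (m + 2) : ℂ) ^ lam (m + 2) * monoTail p n lam (m + 2) Q *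
        ((Q (m + 2) : ℂ) ^ (integratedDegree lam m + 1) *
          qBeta p (integratedDegree lam m) (lam (m + 2))) := by
  rw [integratedMono, prod_range_succ, integratedDegree_succ]
  ring

theorem integratedMono_last {m : ℕ} (Q : ℕ → ℝ) (hQ : Q (m + 1) = 1) :
    integratedMono p (m + 1) lam m Q =
      ∏ j ∈ range m, qBeta p (integratedDegree lam j) (lam (j + 2)) := by
  simp [integratedMono, monoTail, hQ]

theorem jacksonIntegralC_sum_integratedMono (hp0 : p ≠ 0) (hp1 : |p| < 1) {m : ℕ}
    (hm : m + 2 ≤ n) (s : Finset (ℕ → ℕ)) (coef : (ℕ → ℕ) → ℂ) (Q : ℕ → ℝ) :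
    jacksonIntegralC p (Q (m + 2))
        (fun x => ∑ lam ∈ s, coef lam * integratedMono p n lam m (Function.update Q (m + 1) x)) =
      ∑ lam ∈ s, coef lam * integratedMono p n lam (m + 1) Q := by
  simp only [integratedMono_update _ hm, ← mul_assoc (coef _)]
  rw [jacksonIntegralC_sum_mul_pow_mul_qPochhammer hp0 hp1]
  refine sum_congr rfl fun lam _ => ?_
  rw [integratedMono_succ]
  ring

end Monomials

theorem monoQ_eq_integratedMono (q : ℝ) {n : ℕ} (hn : 2 ≤ n) (lam : ℕ → ℕ) (Q : ℕ → ℝ) :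
    monoQ q n lam Q = integratedMono (q ^ 2) n lam 0 (Function.update Q n 1) := by
  have hQ : ∀ i, ((Function.update Q n 1 i : ℝ) : ℂ) = if i = n then 1 else (Q i : ℂ) := fun i => by
    rw [Function.update_apply]; split_ifs <;> simp
  have hpow : ∏ i ∈ Icc 1 (n - 1), (Q i : ℂ) ^ lam i =
      (Q 1 : ℂ) ^ lam 1 * ∏ i ∈ Icc 2 n, ((Function.update Q n 1 i : ℝ) : ℂ) ^ lam i := by
    rw [← insert_Icc_add_one_left_eq_Icc (by omega : 1 ≤ n - 1), prod_insert (by simp),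
      show n = n - 1 + 1 by omega, prod_Icc_succ_top (by omega), Nat.add_sub_cancel]
    simp only [Function.update_self, Complex.ofReal_one, one_pow, mul_one]
    congr 1
    exact prod_congr rfl fun i hi => by rw [Function.update_of_ne (by grind)]
  rw [monoQ, integratedMono, monoTail, hpow, integratedDegree, zero_add, Icc_self, sum_singleton,
    add_zero, Function.update_of_ne (by omega), prod_range_zero, one_mul, mul_assoc,
    ← prod_mul_distrib]
  refine congrArg _ (prod_congr rfl fun i hi => ?_)
  rw [hQ i, Function.update_of_ne (by grind), Complex.ofReal_pow]
  rfl

theorem nestIntC_sum_monoQ {q : ℝ} (hq0 : q ≠ 0) (hq1 : |q| < 1) {n : ℕ} (s : Finset (ℕ → ℕ))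
    (coef : (ℕ → ℕ) → ℂ) {m : ℕ} (hm : m + 2 ≤ n) (Q : ℕ → ℝ) :
    nestIntC (q ^ 2) m (fun Q => ∑ lam ∈ s, coef lam * monoQ q n lam Q) Q =
      ∑ lam ∈ s, coef lam * integratedMono (q ^ 2) n lam m (Function.update Q n 1) := by
  induction m generalizing Q with
  | zero => simp only [nestIntC, monoQ_eq_integratedMono q (by omega : 2 ≤ n)]
  | succ m ih =>
    have hp0 : q ^ 2 ≠ 0 := pow_ne_zero 2 hq0
    have hp1 : |q ^ 2| < 1 := by rw [abs_pow]; exact pow_lt_one₀ (abs_nonneg q) hq1 two_ne_zero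
    simp only [nestIntC, ih (by omega), Function.update_comm (show m + 1 ≠ n by omega)]
    rw [← Function.update_of_ne (show m + 2 ≠ n by omega) 1 Q]
    exact jacksonIntegralC_sum_integratedMono hp0 hp1 (by omega) s coef _

theorem hnInt_sum_monoQ {q : ℝ} (hq0 : q ≠ 0) (hq1 : |q| < 1) {n : ℕ} (hn : 2 ≤ n)
    (s : Finset (ℕ → ℕ)) (coef : (ℕ → ℕ) → ℂ) :
    hnInt q n (fun Q => ∑ lam ∈ s, coef lam * monoQ q n lam Q) =
      ∑ lam ∈ s, coef lam *
        ∏ j ∈ range (n - 1), qBeta ((q : ℂ) ^ 2) (integratedDegree lam j) (lam (j + 2)) := by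
  obtain ⟨m, rfl⟩ : ∃ m, n = m + 2 := ⟨n - 2, by omega⟩
  have hp0 : q ^ 2 ≠ 0 := pow_ne_zero 2 hq0
  have hp1 : |q ^ 2| < 1 := by rw [abs_pow]; exact pow_lt_one₀ (abs_nonneg q) hq1 two_ne_zero
  have hstep := jacksonIntegralC_sum_integratedMono hp0 hp1 (le_refl (m + 2)) s coef
    (Function.update (fun _ => 0) (m + 2) 1)
  rw [Function.update_self] at hstep
  simp only [hnInt, Nat.add_sub_cancel, nestIntC_sum_monoQ hq0 hq1 s coef le_rfl,
    Function.update_comm (show m + 1 ≠ m + 2 by omega), show m + 2 - 1 = m + 1 by omega, hstep]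
  simp [integratedMono_last]

theorem hnVal_exponent (lam : ℕ → ℕ) (N : ℕ) :
    ((((∑ i ∈ Icc 1 (N + 1), lam i) ^ 2 : ℕ) : ℤ) +
        ∑ i ∈ Icc 1 (N + 1), (((2 * (i - 1) * lam i : ℕ) : ℤ) - ((lam i ^ 2 : ℕ) : ℤ))) =
      ((2 * ∑ j ∈ range N, lam (j + 2) * (integratedDegree lam j + 1) : ℕ) : ℤ) := by
  induction N with
  | zero => simp
  | succ N ih =>
    simp only [sum_Icc_succ_top (show 1 ≤ N + 1 + 1 by omega), sum_range_succ,
      integratedDegree.eq_1 lam N]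
    push_cast at ih ⊢
    linear_combination ih

theorem prod_qBeta_mul_qPochhammer {P : ℂ} (hP : ‖P‖ < 1) (lam : ℕ → ℕ) (N : ℕ) :
    (∏ j ∈ range N, qBeta P (integratedDegree lam j) (lam (j + 2))) *
        qPochhammer P P (integratedDegree lam N) =
      (1 - P) ^ N * P ^ (∑ j ∈ range N, lam (j + 2) * (integratedDegree lam j + 1)) *
        (qPochhammer P P (lam 1) * ∏ j ∈ range N, qPochhammer P P (lam (j + 2))) := by
  induction N with
  | zero => simp [integratedDegree]
  | succ N ih =>
    rw [prod_range_succ, integratedDegree_succ, mul_assoc, qBeta_mul_qPochhammer hP]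
    rw [prod_range_succ, sum_range_succ, pow_succ, pow_add]
    linear_combination ((1 - P) * P ^ (lam (N + 2) * (integratedDegree lam N + 1)) *
      qPochhammer P P (lam (N + 2))) * ih

theorem hnVal_succ (q : ℝ) (lam : ℕ → ℕ) (N : ℕ) :
    hnVal q (N + 1) lam =
      ((q : ℂ) ^ 2) ^ (∑ j ∈ range N, lam (j + 2) * (integratedDegree lam j + 1)) *
          (qPochhammer ((q : ℂ) ^ 2) ((q : ℂ) ^ 2) (lam 1) *
            ∏ j ∈ range N, qPochhammer ((q : ℂ) ^ 2) ((q : ℂ) ^ 2) (lam (j + 2))) *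
        qPochhammer ((q : ℂ) ^ 2) ((q : ℂ) ^ 2) N /
      qPochhammer ((q : ℂ) ^ 2) ((q : ℂ) ^ 2) (integratedDegree lam N) := by
  have hprod : ∀ f : ℕ → ℂ, ∏ i ∈ Icc 1 (N + 1), f i = f 1 * ∏ j ∈ range N, f (j + 2) := by
    intro f
    rw [← insert_Icc_add_one_left_eq_Icc (by omega : 1 ≤ N + 1), prod_insert (by simp),
      ← Ico_add_one_right_eq_Icc, prod_Ico_eq_prod_range, show N + 1 + 1 - (1 + 1) = N by omega]
    simp only [add_comm (1 + 1)]
  rw [hnVal, hnVal_exponent, zpow_natCast, pow_mul, Nat.add_sub_cancel,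
    show ∑ i ∈ Icc 1 (N + 1), lam i + (N + 1) - 1 = integratedDegree lam N by
      rw [integratedDegree]; omega, hprod]
  rfl

end

theorem haar_as_multiple_jackson_integral_general (n : ℕ) (q : ℝ) (hn : 2 ≤ n)
    (h0 : 0 < q) (h1 : q < 1) (s : Finset (ℕ → ℕ)) (coef : (ℕ → ℕ) → ℂ) :
    (∏ j ∈ Finset.range (n - 1), (1 - (q : ℂ) ^ 2 * ((q : ℂ) ^ 2) ^ j)) /
        (1 - (q : ℂ) ^ 2) ^ (n - 1) *
        hnInt q n (fun Q => ∑ lam ∈ s, coef lam * monoQ q n lam Q) =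
      ∑ lam ∈ s, coef lam * hnVal q n lam := by
  have hq1 : |q| < 1 := by rwa [abs_of_pos h0]
  have hP : ‖(q : ℂ) ^ 2‖ < 1 := by
    rw [norm_pow, Complex.norm_real, Real.norm_eq_abs]
    exact pow_lt_one₀ (abs_nonneg q) hq1 two_ne_zero
  obtain ⟨N, rfl⟩ : ∃ N, n = N + 1 := ⟨n - 1, by omega⟩
  rw [hnInt_sum_monoQ h0.ne' hq1 hn, mul_sum, Nat.add_sub_cancel]
  refine sum_congr rfl fun lam _ => ?_
  have h1P : (1 - (q : ℂ) ^ 2) ^ N ≠ 0 := pow_ne_zero _ (sub_ne_zero.2 fun h => by simp [← h] at hP)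
  have hden := qPochhammer_ne_zero hP hP.le (integratedDegree lam N)
  rw [hnVal_succ, mul_left_comm]
  congr 1
  rw [eq_div_iff hden, mul_assoc, prod_qBeta_mul_qPochhammer hP]
  change qPochhammer _ _ N / _ * _ = _
  field_simp

/-- For any `φ` in the span of the `z^λ w^λ` (i.e. in `ℂ[Q_1,…,Q_{n-1}]`), the invariant
functional is given by the multiple Jackson `q²`-integral:
`h_n(φ) = ((q²;q²)_{n-1}/(1−q²)^{n-1}) ∫_0^1 ∫_0^{Q_{n-1}} ⋯ ∫_0^{Q_2} φ d_{q²}Q_1 ⋯ d_{q²}Q_{n-1}`,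
where `h_n` is determined on basis monomials by `hnVal`. -/
theorem haar_as_multiple_jackson_integral (n : ℕ) (q : ℝ) (hn : 2 ≤ n)
    (h0 : 0 < q) (h1 : q < 1) (s : Finset (ℕ → ℕ)) (coef : (ℕ → ℕ) → ℂ)
    (hs : ∀ lam ∈ s, ∀ j, lam j ≠ 0 → 1 ≤ j ∧ j ≤ n)
    (hφ : ∃ lam ∈ s, coef lam ≠ 0) :
    (∏ j ∈ Finset.range (n - 1), (1 - (q : ℂ) ^ 2 * ((q : ℂ) ^ 2) ^ j)) /
        (1 - (q : ℂ) ^ 2) ^ (n - 1) *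
        hnInt q n (fun Q => ∑ lam ∈ s, coef lam * monoQ q n lam Q) =
      ∑ lam ∈ s, coef lam * hnVal q n lam :=
  haar_as_multiple_jackson_integral_general n q hn h0 h1 s coef
end
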